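/- arXiv:1910.12103 — 6 statements merged into one kernel-verified Lean document; each statement's English description precedes it below -/
import Mathlib

section
/- If A is a finitely presented group and every quotient group of A is finitely presented, then A is Hopfian, i.e., every surjective group homomorphism A → A is injective. -/
/-!
The kernels of the iterates `φ^m` of a surjective endomorphism form an ascending chain of normal
subgroups with union `K`. Since `A` is finitely generated and `A ⧸ K` is finitely presented, `K` is
the normal closure of finitely many elements (Tietze), which all lie in one `ker φ^m`; hence
`ker φ^(m+1) = ker φ^m`, and as `φ^m` is onto this forces `ker φ = 1`.
-/

/-- A group is finitely presented if it is the quotient of a finitely generated free group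
by the normal closure of a finite set. -/
def Group.IsFinitelyPresented' (A : Type*) [Group A] : Prop :=
  ∃ (n : ℕ) (π : FreeGroup (Fin n) →* A), Function.Surjective π ∧
    ∃ s : Finset (FreeGroup (Fin n)), Subgroup.normalClosure ↑s = π.ker

theorem Group.IsFinitelyPresented'.fg {G : Type*} [Group G] (hG : Group.IsFinitelyPresented' G) :
    Group.FG G :=
  let ⟨_, _, hπ, _⟩ := hG
  Group.fg_of_surjective hπ

theorem FreeGroup.exists_comp_eq_of_surjective {α G H : Type*} [Group G] [Group H]
    (f : FreeGroup α →* H) {g : G →* H} (hg : Function.Surjective g) :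
    ∃ h : FreeGroup α →* G, g.comp h = f :=
  ⟨FreeGroup.lift (Function.surjInv hg ∘ f ∘ FreeGroup.of),
    FreeGroup.ext_hom _ _ fun a => by simp [Function.surjInv_eq hg]⟩

open Subgroup in
theorem Group.IsFinitelyPresented'.exists_normalClosure_eq_ker_of_freeGroup {α H : Type*}
    [Finite α] [Group H] (hH : Group.IsFinitelyPresented' H) (ψ : FreeGroup α →* H)
    (hψ : Function.Surjective ψ) :
    ∃ s : Set (FreeGroup α), s.Finite ∧ normalClosure s = ψ.ker := by
  obtain ⟨n, ρ, hρ, T, hT⟩ := hH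
  obtain ⟨lift, hlift⟩ := FreeGroup.exists_comp_eq_of_surjective ρ hψ
  obtain ⟨back, hback⟩ := FreeGroup.exists_comp_eq_of_surjective ψ hρ
  -- `lift ∘ back` is the identity modulo `normalClosure s`, and it maps `ker ψ` into it.
  set s := lift '' T ∪ Set.range fun a => (FreeGroup.of a)⁻¹ * lift (back (FreeGroup.of a))
  have hψlift (w) : ψ (lift w) = ρ w := DFunLike.congr_fun hlift w
  have hρback (w) : ρ (back w) = ψ w := DFunLike.congr_fun hback w
  refine ⟨s, (T.finite_toSet.image _).union (Set.finite_range _), le_antisymm ?_ ?_⟩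
  · refine normalClosure_le_normal ?_
    rintro _ (⟨t, ht, rfl⟩ | ⟨a, rfl⟩)
    · rw [SetLike.mem_coe, MonoidHom.mem_ker, hψlift, ← MonoidHom.mem_ker, ← hT]
      exact subset_normalClosure ht
    · simp [hψlift, hρback]
  · intro w hw
    let p := QuotientGroup.mk' (normalClosure s)
    have hp : p.comp (lift.comp back) = p := FreeGroup.ext_hom _ _ fun a => by
      have : (FreeGroup.of a)⁻¹ * lift (back (FreeGroup.of a)) ∈ normalClosure s :=
        subset_normalClosure (Or.inr ⟨a, rfl⟩)
      rwa [← QuotientGroup.ker_mk' (normalClosure s), MonoidHom.mem_ker, map_mul, map_inv,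
        inv_mul_eq_one, eq_comm] at this
    have hback_w : back w ∈ normalClosure (T : Set (FreeGroup (Fin n))) := by
      rw [hT, MonoidHom.mem_ker, hρback]; exact hw
    have hlift_back_w : lift (back w) ∈ normalClosure s := by
      exact normalClosure_le_normal (N := (normalClosure s).comap lift)
        (fun t ht => subset_normalClosure (Or.inl ⟨t, ht, rfl⟩)) hback_w
    rw [← QuotientGroup.ker_mk' (normalClosure s), MonoidHom.mem_ker] at hlift_back_w ⊢
    rw [← hlift_back_w]
    exact (DFunLike.congr_fun hp w).symm

open Subgroup in
theorem Group.IsFinitelyPresented'.exists_normalClosure_eq_ker {G H : Type*} [Group G] [Group H]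
    [Group.FG G] (hH : Group.IsFinitelyPresented' H) (f : G →* H) (hf : Function.Surjective f) :
    ∃ s : Set G, s.Finite ∧ normalClosure s = f.ker := by
  obtain ⟨α, _, π, hπ⟩ := Group.fg_iff_exists_freeGroup_hom_surjective_finite.mp ‹Group.FG G›
  obtain ⟨s, hs, hsker⟩ := hH.exists_normalClosure_eq_ker_of_freeGroup (f.comp π) (hf.comp hπ)
  refine ⟨π '' s, hs.image π, ?_⟩
  rw [← map_normalClosure s π hπ, hsker, ← MonoidHom.comap_ker, map_comap_eq_self_of_surjective hπ]

theorem Subgroup.exists_iSup_le_of_iSup_eq_normalClosure {G ι : Type*} [Group G] [Nonempty ι]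
    {K : ι → Subgroup G} [∀ i, (K i).Normal] (hK : Directed (· ≤ ·) K) {s : Set G}
    (hs : s.Finite) (hKs : ⨆ i, K i = normalClosure s) : ∃ i, ⨆ j, K j ≤ K i := by
  have hsK : (hs.toFinset : Set G) ⊆ ⋃ i, (K i : Set G) := by
    rw [hs.coe_toFinset, ← coe_iSup_of_directed hK, hKs]
    exact subset_normalClosure
  obtain ⟨i, hi⟩ := (directed_comp.mpr hK).exists_mem_subset_of_finset_subset_biUnion hsK
  rw [hs.coe_toFinset] at hi
  exact ⟨i, hKs ▸ normalClosure_le_normal hi⟩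

namespace Monoid.End
variable {G : Type*} [Group G]

theorem pow_succ_apply (φ : Monoid.End G) (m : ℕ) (a : G) : (φ ^ (m + 1)) a = φ ((φ ^ m) a) := by
  rw [pow_succ', coe_mul, Function.comp_apply]

theorem monotone_ker_pow (φ : Monoid.End G) : Monotone fun m : ℕ => MonoidHom.ker (φ ^ m) :=
  monotone_nat_of_le_succ fun m a (ha : (φ ^ m) a = 1) =>
    show (φ ^ (m + 1)) a = 1 by rw [pow_succ_apply, ha, map_one]

theorem injective_of_ker_pow_succ_le {φ : Monoid.End G} (hφ : Function.Surjective φ) {m : ℕ}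
    (h : MonoidHom.ker (φ ^ (m + 1)) ≤ MonoidHom.ker (φ ^ m)) : Function.Injective φ := by
  refine (injective_iff_map_eq_one φ).mpr fun a ha => ?_
  obtain ⟨b, rfl⟩ : ∃ b, (φ ^ m) b = a := by
    rw [coe_pow]; exact hφ.iterate m a
  exact h (show (φ ^ (m + 1)) b = 1 by rwa [pow_succ_apply])

end Monoid.End

theorem hopfian_of_all_quotients_fp
    {A : Type*} [Group A]
    (hAfp : Group.IsFinitelyPresented' A)
    (hquot : ∀ (N : Subgroup A) [N.Normal], Group.IsFinitelyPresented' (A ⧸ N)) :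
    ∀ φ : A →* A, Function.Surjective φ → Function.Injective φ := by
  intro φ hφ
  let ψ : Monoid.End A := φ
  let K (m : ℕ) : Subgroup A := MonoidHom.ker (ψ ^ m)
  have : Group.FG A := hAfp.fg
  obtain ⟨s, hs, hsK⟩ := (hquot (⨆ m, K m)).exists_normalClosure_eq_ker _
    (QuotientGroup.mk'_surjective _)
  rw [QuotientGroup.ker_mk'] at hsK
  have hK : Monotone K := Monoid.End.monotone_ker_pow ψ
  obtain ⟨m, hm⟩ := Subgroup.exists_iSup_le_of_iSup_eq_normalClosure hK.directed_le hs hsK.symm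
  exact Monoid.End.injective_of_ker_pow_succ_le (φ := ψ) hφ ((le_iSup K (m + 1)).trans hm)
end

section
/- Let B and C be associative unital K-algebras over a field K. The direct product algebra A = B × C is finitely presented as a K-algebra if and only if both B and C are finitely presented as K-algebras. -/
/-!
A quotient of a finitely presented algebra by a finitely generated two-sided ideal is again
finitely presented; since the kernels of the projections `B × C → B` and `B × C → C` are
generated by `(0, 1)` and `(1, 0)`, this gives one direction.

Conversely, `FreeAlgebra K X × FreeAlgebra K Y` is presented by the generators `X ⊕ Y` together
with an idempotent `e` subject to: `e` commutes with all generators, `x * e = x` for `x ∈ X` and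
`y * e = 0` for `y ∈ Y`. Indeed, in the presented algebra `e` is a central idempotent, so the
Peirce decomposition `(p, q) ↦ p * e + q * (1 - e)` is an inverse of the canonical map to the
product. If `B` and `C` are quotients of free algebras by the ideals spanned by `s` and `t`,
then `B × C` is the quotient of the product of these free algebras by the ideal spanned by
`s × {0} ∪ {0} × t`, hence finitely presented.
-/

/-- A (possibly noncommutative) `K`-algebra is finitely presented if it is the quotient of a
free associative algebra on finitely many generators by a finitely generated two-sided ideal. -/
def Algebra.IsFinitelyPresentedNC (K A : Type*) [CommRing K] [Ring A] [Algebra K A] : Prop :=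
  ∃ (n : ℕ) (π : FreeAlgebra K (Fin n) →ₐ[K] A), Function.Surjective π ∧
    ∃ s : Finset (FreeAlgebra K (Fin n)),
      (↑(TwoSidedIdeal.span (↑s : Set (FreeAlgebra K (Fin n)))) : Set (FreeAlgebra K (Fin n)))
        = {x | π x = 0}

namespace TwoSidedIdeal

variable {R S : Type*} [Ring R] [Ring S]

lemma span_union (s t : Set R) : span (s ∪ t) = span s ⊔ span t :=
  le_antisymm
    (span_le.2 <| Set.union_subset (span_le.1 le_sup_left) (span_le.1 le_sup_right))
    (sup_le (span_mono Set.subset_union_left) (span_mono Set.subset_union_right))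

section Surjective

variable {F : Type*} [FunLike F R S] [RingHomClass F R S] {f : F}

lemma mem_map_of_surjective (hf : Function.Surjective f) {I : TwoSidedIdeal R} {y : S} :
    y ∈ map f I ↔ ∃ x ∈ I, f x = y := by
  refine ⟨fun hy ↦ ?_, fun ⟨x, hx, hxy⟩ ↦ subset_span ⟨x, hx, hxy⟩⟩
  let image : TwoSidedIdeal S := .mk' (f '' I) ⟨0, I.zero_mem, map_zero f⟩
    (fun ⟨x, hx, hxa⟩ ⟨y, hy, hyb⟩ ↦ ⟨x + y, I.add_mem hx hy, by rw [map_add, hxa, hyb]⟩)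
    (fun ⟨x, hx, hxa⟩ ↦ ⟨-x, I.neg_mem hx, by rw [map_neg, hxa]⟩)
    (fun {a _} ⟨x, hx, hxb⟩ ↦ by
      obtain ⟨r, rfl⟩ := hf a
      exact ⟨r * x, I.mul_mem_left _ _ hx, by rw [map_mul, hxb]⟩)
    (fun {_ b} ⟨x, hx, hxa⟩ ↦ by
      obtain ⟨r, rfl⟩ := hf b
      exact ⟨x * r, I.mul_mem_right _ _ hx, by rw [map_mul, hxa]⟩)
  have himage : (image : Set S) = f '' I := coe_mk' ..
  have hy' : y ∈ (image : Set S) := span_le.2 himage.symm.subset hy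
  rwa [himage] at hy'

lemma comap_span_of_surjective (hf : Function.Surjective f) (t : Set S) {u : S → R}
    (hu : ∀ a, f (u a) = a) : comap f (span t) = ker f ⊔ span (u '' t) := by
  refine le_antisymm (fun x hx ↦ ?_) (sup_le (fun x hx ↦ ?_) (span_le.2 ?_))
  · have ht : span t ≤ map f (ker f ⊔ span (u '' t)) := span_le.2 fun a ha ↦
      (mem_map_of_surjective hf).2 ⟨u a, mem_sup_right (subset_span ⟨a, ha, rfl⟩), hu a⟩
    obtain ⟨y, hy, hxy⟩ := (mem_map_of_surjective hf).1 (ht ((mem_comap f).1 hx))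
    have hker : x - y ∈ ker f := (mem_ker f).2 (by rw [map_sub, hxy, sub_self])
    simpa using add_mem _ (mem_sup_left hker) hy
  · rw [mem_comap f, (mem_ker f).1 hx]
    exact zero_mem _
  · rintro _ ⟨a, ha, rfl⟩
    exact (mem_comap f).2 (by rw [hu]; exact subset_span ha)

end Surjective

lemma ker_fst : ker (RingHom.fst R S) = span {(0, 1)} := by
  refine le_antisymm (fun p hp ↦ ?_) (span_le.2 (by simp [mem_ker]))
  have hp1 : p.1 = 0 := (mem_ker _).1 hp
  have : p = p * (0, 1) := by ext <;> simp [hp1]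
  exact this ▸ mul_mem_left _ _ _ (subset_span rfl)

lemma ker_snd : ker (RingHom.snd R S) = span {(1, 0)} := by
  refine le_antisymm (fun p hp ↦ ?_) (span_le.2 (by simp [mem_ker]))
  have hp2 : p.2 = 0 := (mem_ker _).1 hp
  have : p = p * (1, 0) := by ext <;> simp [hp2]
  exact this ▸ mul_mem_left _ _ _ (subset_span rfl)

lemma mk_zero_mem_span_prod {s : Set R} {x : R} (hx : x ∈ span s) (t : Set S) :
    (x, (0 : S)) ∈ span ((·, 0) '' s ∪ (0, ·) '' t) := by
  induction hx using span_induction with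
  | mem x h => exact subset_span (Or.inl ⟨x, h, rfl⟩)
  | zero => exact zero_mem _
  | add x y _ _ hx hy => simpa using add_mem _ hx hy
  | neg x _ hx => simpa using neg_mem _ hx
  | left_absorb a x _ hx => simpa using mul_mem_left _ (a, 0) _ hx
  | right_absorb b x _ hx => simpa using mul_mem_right _ _ (b, 0) hx

lemma zero_mk_mem_span_prod {t : Set S} {y : S} (hy : y ∈ span t) (s : Set R) :
    ((0 : R), y) ∈ span ((·, 0) '' s ∪ (0, ·) '' t) := by
  induction hy using span_induction with
  | mem y h => exact subset_span (Or.inr ⟨y, h, rfl⟩)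
  | zero => exact zero_mem _
  | add x y _ _ hx hy => simpa using add_mem _ hx hy
  | neg x _ hx => simpa using neg_mem _ hx
  | left_absorb a x _ hx => simpa using mul_mem_left _ (0, a) _ hx
  | right_absorb b x _ hx => simpa using mul_mem_right _ _ (0, b) hx

lemma mem_span_prod_iff {s : Set R} {t : Set S} {p : R × S} :
    p ∈ span ((·, 0) '' s ∪ (0, ·) '' t) ↔ p.1 ∈ span s ∧ p.2 ∈ span t := by
  refine ⟨fun hp ↦ ?_, fun ⟨h₁, h₂⟩ ↦ ?_⟩
  · have hle : span ((·, 0) '' s ∪ (0, ·) '' t) ≤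
        comap (RingHom.fst R S) (span s) ⊓ comap (RingHom.snd R S) (span t) := by
      refine span_le.2 ?_
      rintro _ (⟨x, hx, rfl⟩ | ⟨y, hy, rfl⟩)
      · exact (mem_inf _).2 ⟨(mem_comap _).2 (subset_span hx), (mem_comap _).2 (zero_mem _)⟩
      · exact (mem_inf _).2 ⟨(mem_comap _).2 (zero_mem _), (mem_comap _).2 (subset_span hy)⟩
    simpa [mem_inf, mem_comap] using hle hp
  · simpa using add_mem _ (mk_zero_mem_span_prod h₁ t) (zero_mk_mem_span_prod h₂ s)

end TwoSidedIdeal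

noncomputable def FreeAlgebra.equivOfEquiv (R : Type*) [CommSemiring R] {X Y : Type*}
    (e : X ≃ Y) : FreeAlgebra R X ≃ₐ[R] FreeAlgebra R Y :=
  AlgEquiv.ofAlgHom (FreeAlgebra.lift R (FreeAlgebra.ι R ∘ e))
    (FreeAlgebra.lift R (FreeAlgebra.ι R ∘ e.symm))
    (FreeAlgebra.hom_ext <| by ext; simp) (FreeAlgebra.hom_ext <| by ext; simp)

namespace AlgHom

variable {K R S Q : Type*} [CommSemiring K] [Semiring R] [Semiring S] [Ring Q]
  [Algebra K R] [Algebra K S] [Algebra K Q]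

def prodOfCentralIdempotent (f : R →ₐ[K] Q) (g : S →ₐ[K] Q) {e : Q}
    (he : IsIdempotentElem e) (he_comm : ∀ a, Commute e a) : R × S →ₐ[K] Q where
  toFun p := f p.1 * e + g p.2 * (1 - e)
  map_one' := by simp
  map_mul' p q := by
    have he' := he.one_sub
    have he'_comm (a : Q) : Commute (1 - e) a := (Commute.one_left a).sub_left (he_comm a)
    have reorder (a b c d : Q) (h : Commute c b) : a * c * (b * d) = a * b * (c * d) := by
      rw [mul_assoc, ← mul_assoc c, h.eq, mul_assoc, mul_assoc]
    simp only [Prod.fst_mul, Prod.snd_mul, map_mul, add_mul, mul_add]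
    rw [reorder _ _ _ _ (he_comm (f q.1)), reorder _ _ _ _ (he_comm (g q.2)),
      reorder _ _ _ _ (he'_comm (f q.1)), reorder _ _ _ _ (he'_comm (g q.2)),
      he.eq, he'.eq, he.mul_one_sub_self, he.one_sub_mul_self]
    simp
  map_zero' := by simp
  map_add' p q := by simp only [Prod.fst_add, Prod.snd_add, map_add, add_mul]; abel
  commutes' r := by simp [← mul_add]

@[simp]
lemma prodOfCentralIdempotent_apply (f : R →ₐ[K] Q) (g : S →ₐ[K] Q) {e : Q}
    (he : IsIdempotentElem e) (he_comm : ∀ a, Commute e a) (p : R × S) :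
    f.prodOfCentralIdempotent g he he_comm p = f p.1 * e + g p.2 * (1 - e) :=
  rfl

end AlgHom

namespace Algebra

open TwoSidedIdeal

variable {K A A' : Type*} [CommRing K] [Ring A] [Algebra K A] [Ring A'] [Algebra K A']

lemma isFinitelyPresentedNC_iff_span_eq_ker : IsFinitelyPresentedNC K A ↔
    ∃ (n : ℕ) (π : FreeAlgebra K (Fin n) →ₐ[K] A), Function.Surjective π ∧
      ∃ s : Finset (FreeAlgebra K (Fin n)), span (s : Set (FreeAlgebra K (Fin n))) = ker π := by
  have coe_ker (n : ℕ) (π : FreeAlgebra K (Fin n) →ₐ[K] A) :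
      (ker π : Set (FreeAlgebra K (Fin n))) = {x | π x = 0} :=
    Set.ext fun _ ↦ mem_ker π
  simp only [IsFinitelyPresentedNC, ← coe_ker, SetLike.coe_set_eq]

namespace IsFinitelyPresentedNC

lemma of_span_eq_ker {σ : Type*} [Finite σ] {π : FreeAlgebra K σ →ₐ[K] A}
    (hπ : Function.Surjective π) {s : Set (FreeAlgebra K σ)} (hs : s.Finite)
    (h : span s = ker π) : IsFinitelyPresentedNC K A := by
  obtain ⟨n, ⟨e⟩⟩ := Finite.exists_equiv_fin σ
  let φ := FreeAlgebra.equivOfEquiv K e.symm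
  refine isFinitelyPresentedNC_iff_span_eq_ker.2
    ⟨n, π.comp φ, hπ.comp φ.surjective, (hs.image φ.symm).toFinset, ?_⟩
  have hφ := comap_span_of_surjective φ.surjective s (u := φ.symm) φ.apply_symm_apply
  rw [(ker_eq_bot φ).2 φ.injective, bot_sup_eq, h] at hφ
  rw [Set.Finite.coe_toFinset, ← hφ]
  ext x
  simp [mem_comap, mem_ker]

lemma of_surjective (hA : IsFinitelyPresentedNC K A) {g : A →ₐ[K] A'}
    (hg : Function.Surjective g) {t : Set A} (ht : t.Finite) (h : span t = ker g) :
    IsFinitelyPresentedNC K A' := by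
  obtain ⟨n, π, hπ, s, hs⟩ := isFinitelyPresentedNC_iff_span_eq_ker.1 hA
  refine of_span_eq_ker (π := g.comp π) (hg.comp hπ)
    (s.finite_toSet.union (ht.image (Function.surjInv hπ))) ?_
  rw [span_union, hs, ← comap_span_of_surjective hπ t (Function.surjInv_eq hπ), h]
  ext x
  simp [mem_comap, mem_ker]

end IsFinitelyPresentedNC

end Algebra

namespace FreeAlgebra

open TwoSidedIdeal

variable (K X Y : Type*) [CommRing K]

def prodGenerators : Option (X ⊕ Y) → FreeAlgebra K X × FreeAlgebra K Y
  | none => (1, 0)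
  | some (.inl x) => (ι K x, 0)
  | some (.inr y) => (0, ι K y)

def prodRelations : Set (FreeAlgebra K (Option (X ⊕ Y))) :=
  {ι K none * ι K none - ι K none} ∪
    Set.range (fun g ↦ ι K none * ι K g - ι K g * ι K none) ∪
    Set.range (fun x ↦ ι K (some (.inl x)) * ι K none - ι K (some (.inl x))) ∪
    Set.range (fun y ↦ ι K (some (.inr y)) * ι K none)

lemma span_prodRelations_le_ker :
    span (prodRelations K X Y) ≤ ker (lift K (prodGenerators K X Y)) := by
  refine span_le.2 ?_
  rintro _ (((rfl | ⟨_ | _ | _, rfl⟩) | ⟨x, rfl⟩) | ⟨y, rfl⟩) <;>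
    simp [mem_ker, prodGenerators]

lemma ker_le_span_prodRelations :
    ker (lift K (prodGenerators K X Y)) ≤ span (prodRelations K X Y) := by
  let mk := (span (prodRelations K X Y)).ringCon.mkₐ K
  have mk_eq_zero {w} : mk w = 0 ↔ w ∈ span (prodRelations K X Y) := by
    conv_rhs => rw [← ker_ringCon_mk' (span (prodRelations K X Y))]
    exact (mem_ker _).symm
  have mk_rel {w} (hw : w ∈ prodRelations K X Y) : mk w = 0 := mk_eq_zero.2 (subset_span hw)
  let e := mk (ι K none)
  have he : IsIdempotentElem e := sub_eq_zero.1 <| by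
    simpa using mk_rel (Or.inl <| Or.inl <| Or.inl rfl)
  have he_gen (g) : e * mk (ι K g) = mk (ι K g) * e := sub_eq_zero.1 <| by
    simpa using mk_rel (Or.inl <| Or.inl <| Or.inr ⟨g, rfl⟩)
  have hx (x : X) : mk (ι K (some (.inl x))) * e = mk (ι K (some (.inl x))) :=
    sub_eq_zero.1 <| by simpa using mk_rel (Or.inl <| Or.inr ⟨x, rfl⟩)
  have hy (y : Y) : mk (ι K (some (.inr y))) * e = 0 := by
    simpa using mk_rel (Or.inr ⟨y, rfl⟩)
  have he_comm (a) : Commute e a := by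
    obtain ⟨w, rfl⟩ : ∃ w, mk w = a := RingCon.mkₐ_surjective _ a
    induction w using FreeAlgebra.induction with
    | grade0 r => simpa using Algebra.commute_algebraMap_right r e
    | grade1 g => exact he_gen g
    | mul a b ha hb => simpa using ha.mul_right hb
    | add a b ha hb => simpa using ha.add_right hb
  let Ψ := AlgHom.prodOfCentralIdempotent (lift K fun x ↦ mk (ι K (some (.inl x))))
    (lift K fun y ↦ mk (ι K (some (.inr y)))) he he_comm
  have hΨ : Ψ.comp (lift K (prodGenerators K X Y)) = mk := by
    refine hom_ext (funext fun g ↦ ?_)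
    rcases g with _ | x | y <;> simp [Ψ, prodGenerators, e, hx, hy, mul_sub]
  intro w hw
  rw [← mk_eq_zero, ← hΨ, AlgHom.comp_apply, (mem_ker _).1 hw, map_zero]

lemma lift_prodGenerators_surjective :
    Function.Surjective (lift K (prodGenerators K X Y)) := by
  rintro ⟨p, q⟩
  let ιX : FreeAlgebra K X →ₐ[K] FreeAlgebra K (Option (X ⊕ Y)) := lift K (ι K ∘ some ∘ .inl)
  let ιY : FreeAlgebra K Y →ₐ[K] FreeAlgebra K (Option (X ⊕ Y)) := lift K (ι K ∘ some ∘ .inr)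
  have hX : (AlgHom.fst K _ _).comp ((lift K (prodGenerators K X Y)).comp ιX) = .id K _ :=
    hom_ext (funext fun x ↦ by simp [ιX, prodGenerators])
  have hY : (AlgHom.snd K _ _).comp ((lift K (prodGenerators K X Y)).comp ιY) = .id K _ :=
    hom_ext (funext fun y ↦ by simp [ιY, prodGenerators])
  refine ⟨ιX p * ι K none + ιY q * (1 - ι K none), Prod.ext ?_ ?_⟩
  · simpa [prodGenerators] using congr($hX p)
  · simpa [prodGenerators] using congr($hY q)

lemma isFinitelyPresentedNC_prod [Finite X] [Finite Y] :
    Algebra.IsFinitelyPresentedNC K (FreeAlgebra K X × FreeAlgebra K Y) :=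
  .of_span_eq_ker (lift_prodGenerators_surjective K X Y)
    ((((Set.finite_singleton _).union (Set.finite_range _)).union (Set.finite_range _)).union
      (Set.finite_range _))
    (le_antisymm (span_prodRelations_le_ker K X Y) (ker_le_span_prodRelations K X Y))

end FreeAlgebra

lemma Algebra.IsFinitelyPresentedNC.prod {K B C : Type*} [CommRing K] [Ring B] [Algebra K B]
    [Ring C] [Algebra K C] (hB : IsFinitelyPresentedNC K B) (hC : IsFinitelyPresentedNC K C) :
    IsFinitelyPresentedNC K (B × C) := by
  obtain ⟨m, πB, hπB, sB, hsB⟩ := isFinitelyPresentedNC_iff_span_eq_ker.1 hB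
  obtain ⟨n, πC, hπC, sC, hsC⟩ := isFinitelyPresentedNC_iff_span_eq_ker.1 hC
  refine (FreeAlgebra.isFinitelyPresentedNC_prod K (Fin m) (Fin n)).of_surjective
    (g := πB.prodMap πC) (hπB.prodMap hπC) (t := (·, 0) '' sB ∪ (0, ·) '' sC)
    ((sB.finite_toSet.image _).union (sC.finite_toSet.image _)) ?_
  ext p
  rw [TwoSidedIdeal.mem_span_prod_iff, hsB, hsC, TwoSidedIdeal.mem_ker, TwoSidedIdeal.mem_ker,
    TwoSidedIdeal.mem_ker, Prod.ext_iff]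
  rfl

theorem prod_algebra_fp_iff (K : Type*) [Field K] {B C : Type*}
    [Ring B] [Algebra K B] [Ring C] [Algebra K C] :
    Algebra.IsFinitelyPresentedNC K (B × C) ↔
      Algebra.IsFinitelyPresentedNC K B ∧ Algebra.IsFinitelyPresentedNC K C :=
  ⟨fun h ↦ ⟨h.of_surjective (g := AlgHom.fst K B C) Prod.fst_surjective
      (Set.finite_singleton _) TwoSidedIdeal.ker_fst.symm,
    h.of_surjective (g := AlgHom.snd K B C) Prod.snd_surjective
      (Set.finite_singleton _) TwoSidedIdeal.ker_snd.symm⟩,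
  fun ⟨hB, hC⟩ ↦ hB.prod hC⟩
end

section
/- Let G be a group, R a commutative ring with 1, and N a normal subgroup of G. Then N is finitely generated as a normal subgroup of G if and only if the kernel of the natural map R[G] → R[G/N] (which is the ideal generated by the elements 1 - g for g ∈ N) is finitely generated as a two-sided ideal of R[G]. -/
/-!
Let `J` be the two-sided ideal spanned by the `g - 1`, `g ∈ s`. The quotient map `R[G] → R[G] ⧸ J`
sends `G` into the units and kills `s`, hence the whole normal closure `⟨⟨s⟩⟩`, so it factors
through `R[G/⟨⟨s⟩⟩]`: `J` is the kernel of `R[G] → R[G/⟨⟨s⟩⟩]`. For nontrivial `R` this kernel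
determines the normal subgroup, as `g - 1` lies in it only for `g ∈ ⟨⟨s⟩⟩`. Hence finite normal
generators of `N` give finite ideal generators, and conversely finitely many generators of the
kernel lie in the span of finitely many `n - 1`, `n ∈ N`, and these `n` normally generate `N`.
-/

namespace TwoSidedIdeal

variable {A : Type*} [NonUnitalNonAssocRing A]

theorem exists_finset_subset_mem_span {s : Set A} {x : A} (hx : x ∈ span s) :
    ∃ t : Finset A, ↑t ⊆ s ∧ x ∈ span (t : Set A) := by
  classical
  induction hx using span_induction with
  | mem x hx => exact ⟨{x}, by simpa using hx, subset_span (by simp)⟩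
  | zero => exact ⟨∅, by simp, zero_mem _⟩
  | add x y _ _ hx hy =>
    obtain ⟨t, hts, hxt⟩ := hx
    obtain ⟨u, hus, hyu⟩ := hy
    exact ⟨t ∪ u, by simpa using ⟨hts, hus⟩,
      add_mem _ (span_mono (by simp) hxt) (span_mono (by simp) hyu)⟩
  | neg x _ hx =>
    obtain ⟨t, hts, hxt⟩ := hx
    exact ⟨t, hts, neg_mem _ hxt⟩
  | left_absorb a x _ hx =>
    obtain ⟨t, hts, hxt⟩ := hx
    exact ⟨t, hts, mul_mem_left _ _ _ hxt⟩
  | right_absorb b x _ hx =>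
    obtain ⟨t, hts, hxt⟩ := hx
    exact ⟨t, hts, mul_mem_right _ _ _ hxt⟩

theorem exists_finset_subset_span_eq {s : Set A} (t : Finset A) (h : span (t : Set A) = span s) :
    ∃ u : Finset A, ↑u ⊆ s ∧ span (u : Set A) = span s := by
  classical
  have hts : ∀ x : t, x.1 ∈ span s := fun x => h ▸ subset_span x.2
  choose u hus hxu using fun x : t => exists_finset_subset_mem_span (hts x)
  have hUs : ↑(t.attach.biUnion u) ⊆ s := by simpa using hus
  refine ⟨t.attach.biUnion u, hUs, le_antisymm (span_mono hUs) ?_⟩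
  rw [← h, span_le]
  intro x hx
  have hux : u ⟨x, hx⟩ ⊆ t.attach.biUnion u :=
    Finset.subset_biUnion_of_mem u (Finset.mem_attach _ ⟨x, hx⟩)
  exact span_mono (Finset.coe_subset.2 hux) (hxu ⟨x, hx⟩)

end TwoSidedIdeal

namespace MonoidAlgebra

open TwoSidedIdeal

variable {G : Type*} [Group G] {R : Type*} [CommRing R]

theorem of_sub_one_mem_ker_mapDomainRingHom_mk' {N : Subgroup G} [N.Normal] {g : G}
    (hg : g ∈ N) : of R G g - 1 ∈ ker (mapDomainRingHom R (QuotientGroup.mk' N)) := by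
  rw [mem_ker, map_sub, map_one, mapDomainRingHom_apply, of_apply, mapDomain_single,
    QuotientGroup.mk'_apply, (QuotientGroup.eq_one_iff g).2 hg, ← one_def, sub_self]

theorem of_sub_one_mem_ker_mapDomainRingHom_mk'_iff [Nontrivial R] {N : Subgroup G} [N.Normal]
    {g : G} : of R G g - 1 ∈ ker (mapDomainRingHom R (QuotientGroup.mk' N)) ↔ g ∈ N := by
  refine ⟨fun h => ?_, of_sub_one_mem_ker_mapDomainRingHom_mk'⟩
  rw [mem_ker, map_sub, map_one, sub_eq_zero, mapDomainRingHom_apply, of_apply, mapDomain_single,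
    one_def, ← of_apply, ← of_apply, of_injective.eq_iff] at h
  exact (QuotientGroup.eq_one_iff g).1 h

noncomputable def congruenceSubgroup (J : TwoSidedIdeal R[G]) : Subgroup G :=
  ((J.ringCon.mk' : R[G] →* J.ringCon.Quotient).comp (of R G)).ker

instance (J : TwoSidedIdeal R[G]) : (congruenceSubgroup J).Normal :=
  MonoidHom.normal_ker _

theorem mem_congruenceSubgroup {J : TwoSidedIdeal R[G]} {g : G} :
    g ∈ congruenceSubgroup J ↔ of R G g - 1 ∈ J := by
  rw [← rel_iff, ← RingCon.eq]
  exact Iff.rfl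

theorem ker_mapDomainRingHom_mk'_le {N : Subgroup G} [N.Normal] {J : TwoSidedIdeal R[G]}
    (hN : N ≤ congruenceSubgroup J) : ker (mapDomainRingHom R (QuotientGroup.mk' N)) ≤ J := by
  let π : R[G] →ₐ[R] J.ringCon.Quotient := J.ringCon.mkₐ R
  let ψ := lift R J.ringCon.Quotient (G ⧸ N) (QuotientGroup.lift N _ hN)
  have hπ : ψ.comp (mapDomainAlgHom R R (QuotientGroup.mk' N)) = π := by
    ext g
    simp only [AlgHom.coe_comp, Function.comp_apply, mapDomainAlgHom_apply, QuotientGroup.coe_mk',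
      mapDomain_single, lift_single, one_smul, ψ]
    rfl
  intro x hx
  rw [mem_ker] at hx
  rw [← ker_ringCon_mk' J, mem_ker]
  change π x = 0
  rw [← hπ, AlgHom.comp_apply, mapDomainAlgHom_apply, ← mapDomainRingHom_apply, hx, map_zero]

theorem ker_mapDomainRingHom_mk' (N : Subgroup G) [N.Normal] :
    ker (mapDomainRingHom R (QuotientGroup.mk' N)) = span ((of R G · - 1) '' N) :=
  le_antisymm
    (ker_mapDomainRingHom_mk'_le fun n hn => mem_congruenceSubgroup.2 (subset_span ⟨n, hn, rfl⟩))
    (span_le.2 <| Set.image_subset_iff.2 fun _ => of_sub_one_mem_ker_mapDomainRingHom_mk')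

theorem ker_mapDomainRingHom_mk'_normalClosure (s : Set G) :
    ker (mapDomainRingHom R (QuotientGroup.mk' (Subgroup.normalClosure s))) =
      span ((of R G · - 1) '' s) := by
  refine le_antisymm (ker_mapDomainRingHom_mk'_le ?_) (span_le.2 ?_)
  · exact Subgroup.normalClosure_le_normal fun g hg =>
      mem_congruenceSubgroup.2 (subset_span ⟨g, hg, rfl⟩)
  · exact Set.image_subset_iff.2 fun g hg =>
      of_sub_one_mem_ker_mapDomainRingHom_mk' (Subgroup.subset_normalClosure hg)

theorem ker_mapDomainRingHom_mk'_injective [Nontrivial R] {M N : Subgroup G} [M.Normal]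
    [N.Normal] (h : ker (mapDomainRingHom R (QuotientGroup.mk' M)) =
      ker (mapDomainRingHom R (QuotientGroup.mk' N))) : M = N := by
  ext g
  rw [← of_sub_one_mem_ker_mapDomainRingHom_mk'_iff (R := R), h,
    of_sub_one_mem_ker_mapDomainRingHom_mk'_iff]

end MonoidAlgebra

open MonoidAlgebra TwoSidedIdeal in
theorem normal_fg_iff_augmentation_kernel_fg
    {G : Type*} [Group G] (R : Type*) [CommRing R] [Nontrivial R]
    (N : Subgroup G) [N.Normal] :
    (∃ s : Finset G, ↑s ⊆ (N : Set G) ∧ Subgroup.normalClosure ↑s = N) ↔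
      (∃ t : Finset (MonoidAlgebra R G),
        (↑(TwoSidedIdeal.span (↑t : Set (MonoidAlgebra R G))) : Set (MonoidAlgebra R G)) =
          {x | MonoidAlgebra.mapDomainRingHom R (QuotientGroup.mk' N) x = 0}) := by
  classical
  have hker : {x | mapDomainRingHom R (QuotientGroup.mk' N) x = 0} =
      (ker (mapDomainRingHom R (QuotientGroup.mk' N)) : Set R[G]) := by
    ext; exact (mem_ker _).symm
  simp only [hker, SetLike.coe_set_eq]
  constructor
  · rintro ⟨s, -, rfl⟩
    exact ⟨s.image (of R G · - 1), by rw [Finset.coe_image, ker_mapDomainRingHom_mk'_normalClosure]⟩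
  · rintro ⟨t, ht⟩
    rw [ker_mapDomainRingHom_mk'] at ht
    obtain ⟨u, huN, hu⟩ := exists_finset_subset_span_eq t ht
    obtain ⟨s, hsN, rfl⟩ := Finset.subset_set_image_iff.1 huN
    refine ⟨s, hsN, ker_mapDomainRingHom_mk'_injective (R := R) ?_⟩
    rw [ker_mapDomainRingHom_mk'_normalClosure, ker_mapDomainRingHom_mk', ← hu, Finset.coe_image]
end

section
/- Let G be a finitely generated infinite group. Then the wreath product ℤ ≀ G (the semidirect product of the free abelian group on the set G, with G acting by permuting the basis via right multiplication) is a finitely generated group that is not finitely presented. -/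
/-- The action of `G` on the free abelian group `⊕_{g ∈ G} ℤ = (G →₀ ℤ)` regularly permuting
the basis via right multiplication. -/
noncomputable def wreathAction (G : Type*) [Group G] : G →* MulAut (Multiplicative (G →₀ ℤ)) where
  toFun g := AddEquiv.toMultiplicative (Finsupp.domCongr (Equiv.mulRight g⁻¹))
  map_one' := by
    ext f
    simp [Finsupp.domCongr_apply, Equiv.Perm.one_def]
  map_mul' g h := by
    ext f
    simp [Finsupp.domCongr_apply]
    try ext x
    simp [Finsupp.equivMapDomain_apply, Equiv.Perm.mul_def, Equiv.symm_trans_apply, mul_assoc]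

/-- The restricted wreath product `ℤ ≀ G`, as the semidirect product
`(⊕_{g ∈ G} ℤ) ⋊ G`. -/
def WreathZ (G : Type*) [Group G] := Multiplicative (G →₀ ℤ) ⋊[wreathAction G] G

noncomputable instance (G : Type*) [Group G] : Group (WreathZ G) :=
  inferInstanceAs (Group (Multiplicative (G →₀ ℤ) ⋊[wreathAction G] G))

/-!
Fix the generators `δ = δ₁` and `inr s` (`s` in a finite generating set of `G`) of `ℤ ≀ G`.
For a sign character `χ : G →* ℤˣ` and any `γ : G → ℤ`, the biadditive form
`β (δ_x) (δ_y) = χ y * γ (x * y⁻¹)` on `ℤ[G]` is `G`-equivariant once `G` acts on `ℤ` through `χ`,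
so it defines a central extension `(ℤ[G] ×_β ℤ) ⋊ G` of `ℤ ≀ G` generated by lifts of the same
generators. The central coordinate of the image of a word only involves finitely many values
of `γ`, so if `ℤ ≀ G` were finitely presented, every relation of `ℤ ≀ G` would also hold in the
extension as soon as `γ` vanishes on a certain finite set. But the relation
`⁅t δ t⁻¹, δ⁆ = 1` of `ℤ ≀ G` evaluates to `γ t⁻¹ - χ t * γ t` in the centre, and as `G` is
infinite `t`, `χ`, `γ` can be chosen to make this nonzero: `χ = 1` and `γ` the indicator of `t⁻¹`
if `t ≠ t⁻¹`; otherwise `G` has exponent two and `γ` is the indicator of `t` for a character `χ`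
with `χ t = -1`.
-/

open scoped commutatorElement

@[ext]
structure BilinearExtension {M Z : Type*} [AddCommGroup M] [AddCommGroup Z]
    (β : M →+ M →+ Z) where
  base : M
  center : Z

namespace BilinearExtension

variable {M Z : Type*} [AddCommGroup M] [AddCommGroup Z] {β : M →+ M →+ Z}

instance : Group (BilinearExtension β) where
  mul x y := ⟨x.base + y.base, x.center + y.center + β x.base y.base⟩
  one := ⟨0, 0⟩
  inv x := ⟨-x.base, -x.center + β x.base x.base⟩
  mul_assoc x y w := by
    ext
    · exact add_assoc _ _ _
    · change x.center + y.center + β x.base y.base + w.center + β (x.base + y.base) w.base =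
        x.center + (y.center + w.center + β y.base w.base) + β x.base (y.base + w.base)
      simp only [map_add, AddMonoidHom.add_apply]
      abel
  one_mul x := by
    ext
    · exact zero_add _
    · change 0 + x.center + β 0 x.base = x.center
      simp
  mul_one x := by
    ext
    · exact add_zero _
    · change x.center + 0 + β x.base 0 = x.center
      simp
  inv_mul_cancel x := by
    ext
    · exact neg_add_cancel _
    · change -x.center + β x.base x.base + x.center + β (-x.base) x.base = 0
      simp only [map_neg, AddMonoidHom.neg_apply]
      abel

@[simp] lemma mul_base (x y : BilinearExtension β) : (x * y).base = x.base + y.base := rfl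
@[simp] lemma mul_center (x y : BilinearExtension β) :
    (x * y).center = x.center + y.center + β x.base y.base := rfl
@[simp] lemma one_center : (1 : BilinearExtension β).center = 0 := rfl
@[simp] lemma inv_base (x : BilinearExtension β) : x⁻¹.base = -x.base := rfl
@[simp] lemma inv_center (x : BilinearExtension β) :
    x⁻¹.center = -x.center + β x.base x.base := rfl

def baseHom : BilinearExtension β →* Multiplicative M where
  toFun x := .ofAdd x.base
  map_one' := rfl
  map_mul' _ _ := rfl

@[simp] lemma baseHom_apply (x : BilinearExtension β) : baseHom x = .ofAdd x.base := rfl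

lemma commute_of_base_eq_zero {x : BilinearExtension β} (hx : x.base = 0)
    (y : BilinearExtension β) : Commute x y := by
  ext <;> simp [hx, add_comm]

lemma commutatorElement_mk (m m' : M) :
    ⁅(⟨m, 0⟩ : BilinearExtension β), (⟨m', 0⟩ : BilinearExtension β)⁆ =
      ⟨0, β m m' - β m' m⟩ := by
  ext
  · simp [commutatorElement_def]
  · simp [commutatorElement_def]
    abel

def congr (e : M ≃+ M) (c : Z ≃+ Z) (h : ∀ m m', β (e m) (e m') = c (β m m')) :
    BilinearExtension β ≃* BilinearExtension β where
  toFun x := ⟨e x.base, c x.center⟩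
  invFun x := ⟨e.symm x.base, c.symm x.center⟩
  left_inv x := by simp
  right_inv x := by simp
  map_mul' x y := by ext <;> simp [h]

@[simp] lemma congr_apply (e : M ≃+ M) (c : Z ≃+ Z) (h : ∀ m m', β (e m) (e m') = c (β m m'))
    (x : BilinearExtension β) : congr e c h x = ⟨e x.base, c x.center⟩ := rfl

end BilinearExtension

/- The relators are those of `A` rewritten in the generators `Y`, together with one relation
expressing each generator `y` as a word in the old generators. -/
lemma Group.IsFinitelyPresented'.ker_isFinitelyNormallyGenerated {A : Type*} [Group A]
    (hA : Group.IsFinitelyPresented' A) {Y : Type*} [Finite Y] (ρ : FreeGroup Y →* A)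
    (hρ : Function.Surjective ρ) : ρ.ker.IsFinitelyNormallyGenerated := by
  obtain ⟨n, π, hπ, s, hs⟩ := hA
  choose u hu using fun i => hρ (π (.of i))
  choose v hv using fun y => hπ (ρ (.of y))
  let φ := FreeGroup.lift u
  let ψ := FreeGroup.lift v
  have hφ (w) : ρ (φ w) = π w :=
    DFunLike.congr_fun (f := ρ.comp φ) (FreeGroup.ext_hom _ _ fun i => by simp [φ, hu]) w
  have hψ (w) : π (ψ w) = ρ w :=
    DFunLike.congr_fun (f := π.comp ψ) (FreeGroup.ext_hom _ _ fun y => by simp [ψ, hv]) w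
  let T := φ '' s ∪ Set.range fun y => (φ (ψ (.of y)))⁻¹ * .of y
  refine ⟨T, (s.finite_toSet.image φ).union (Set.finite_range _), le_antisymm ?_ fun w hw => ?_⟩
  · refine Subgroup.normalClosure_le_normal ?_
    rintro _ (⟨r, hr, rfl⟩ | ⟨y, rfl⟩)
    · have hr : r ∈ π.ker := hs ▸ Subgroup.subset_normalClosure hr
      rw [SetLike.mem_coe, MonoidHom.mem_ker, hφ, hr]
    · rw [SetLike.mem_coe, MonoidHom.mem_ker, map_mul, map_inv, hφ, hψ, inv_mul_cancel]
  · let q := QuotientGroup.mk' (Subgroup.normalClosure T)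
    have hq : q.comp (φ.comp ψ) = q := FreeGroup.ext_hom _ _ fun y =>
      QuotientGroup.eq.2 (Subgroup.subset_normalClosure (Or.inr ⟨y, rfl⟩))
    have hφψ : φ (ψ w) ∈ Subgroup.normalClosure T := by
      have hψw : ψ w ∈ π.ker := by rwa [MonoidHom.mem_ker, hψ]
      rw [← hs] at hψw
      exact Subgroup.normalClosure_mono Set.subset_union_left
        (Subgroup.map_normalClosure_le _ φ ⟨_, hψw, rfl⟩)
    rw [← QuotientGroup.eq_one_iff]
    change q w = 1
    rw [← DFunLike.congr_fun hq w]
    exact (QuotientGroup.eq_one_iff _).2 hφψ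

section Involutions

variable {G : Type*} [Group G]

lemma exists_notMem_mul_notMem [Infinite G] (E : Finset G) :
    ∃ y y' : G, y ∉ E ∧ y' ∉ E ∧ y * y' ∉ E := by
  classical
  obtain ⟨y, hy⟩ := Infinite.exists_notMem_finset E
  obtain ⟨y', hy'⟩ := Infinite.exists_notMem_finset (E ∪ E.image (y⁻¹ * ·))
  simp only [Finset.mem_union, Finset.mem_image, not_or, not_exists, not_and] at hy'
  exact ⟨y, y', hy, hy'.1, fun h => hy'.2 _ h (inv_mul_cancel_left y y')⟩

/- Conjugation by all `y` off a finite set inverts `x`; picking `y`, `y'` and `y * y'` among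
them, conjugation by `y * y'` both fixes and inverts `x`. -/
lemma inv_eq_self_of_cofinite [Infinite G] (D : Finset G) (h : ∀ x ∉ D, x⁻¹ = x) (x : G) :
    x⁻¹ = x := by
  classical
  have key (y : G) (hy : y ∉ D ∪ D.image (x⁻¹ * ·)) : x * y = y * x⁻¹ := by
    simp only [Finset.mem_union, Finset.mem_image, not_or, not_exists, not_and] at hy
    have hxy := h (x * y) fun hxy => hy.2 _ hxy (inv_mul_cancel_left x y)
    rwa [mul_inv_rev, h y hy.1, eq_comm] at hxy
  obtain ⟨y, y', hy, hy', hyy'⟩ := exists_notMem_mul_notMem (D ∪ D.image (x⁻¹ * ·))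
  have hx' : x⁻¹ * y' = y' * x := by
    rw [inv_mul_eq_iff_eq_mul, ← mul_assoc, key y' hy', inv_mul_cancel_right]
  refine mul_left_cancel (a := y * y') ?_
  calc y * y' * x⁻¹ = x * y * y' := by rw [← key _ hyy', mul_assoc]
    _ = y * y' * x := by rw [key y hy, mul_assoc, hx', mul_assoc]

lemma exists_monoidHom_unitsInt_eq_neg_one (h : ∀ x : G, x⁻¹ = x) {t : G} (ht : t ≠ 1) :
    ∃ χ : G →* ℤˣ, χ t = -1 := by
  have hsq (g : G) : g * g = 1 := by nth_rewrite 2 [← h g]; exact mul_inv_cancel g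
  let : CommGroup G :=
    { mul_comm := fun a b => (Commute.of_orderOf_dvd_two (fun g => orderOf_dvd_of_pow_eq_one
        (by rw [pow_two, hsq])) a b).eq }
  let : Module (ZMod 2) (Additive G) := AddCommGroup.zmodModule fun x => by
    rw [two_nsmul]; exact hsq x.toMul
  obtain ⟨φ, hφ⟩ : ∃ φ : Module.Dual (ZMod 2) (Additive G), φ (.ofMul t) ≠ 0 := by
    by_contra! hφ
    exact ht ((Module.forall_dual_apply_eq_zero_iff (ZMod 2) (Additive.ofMul t)).1 hφ)
  refine ⟨{ toFun g := (-1 : ℤˣ) ^ φ (.ofMul g)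
            map_one' := by simp
            map_mul' a b := by simp [uzpow_add] }, ?_⟩
  have ht1 : φ (.ofMul t) = 1 := Fin.eq_one_of_ne_zero _ hφ
  simp [ht1]

lemma exists_twist [Infinite G] (B : Finset G) :
    ∃ (t : G) (χ : G →* ℤˣ) (γ : G → ℤ), (∀ b ∈ B, γ b = 0) ∧ γ t⁻¹ ≠ χ t * γ t := by
  classical
  by_cases hB : ∃ t, t⁻¹ ∉ B ∧ t⁻¹ ≠ t
  · obtain ⟨t, htB, ht⟩ := hB
    refine ⟨t, 1, Pi.single t⁻¹ 1,
      fun b hb => Pi.single_eq_of_ne (ne_of_mem_of_not_mem hb htB) _, ?_⟩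
    simp [ht.symm]
  · push Not at hB
    have hinv := inv_eq_self_of_cofinite B fun x hx => by
      simpa using (hB x⁻¹ (by simpa using hx)).symm
    obtain ⟨t, ht⟩ := Infinite.exists_notMem_finset (insert 1 B)
    rw [Finset.mem_insert, not_or] at ht
    obtain ⟨χ, hχ⟩ := exists_monoidHom_unitsInt_eq_neg_one hinv ht.1
    refine ⟨t, χ, Pi.single t 1,
      fun b hb => Pi.single_eq_of_ne (ne_of_mem_of_not_mem hb ht.2) _, ?_⟩
    simp [hinv t, hχ]

end Involutions

section TwistedWreath

open Finsupp SemidirectProduct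

variable {G : Type*} [Group G]

def regularShift (g : G) : (G →₀ ℤ) ≃+ (G →₀ ℤ) := Finsupp.domCongr (Equiv.mulRight g⁻¹)

@[simp] lemma regularShift_apply (g : G) (f : G →₀ ℤ) (x : G) :
    regularShift g f x = f (x * g) := by
  simp [regularShift, Finsupp.domCongr_apply, equivMapDomain_apply]

lemma regularShift_single (g x : G) (n : ℤ) :
    regularShift g (single x n) = single (x * g⁻¹) n := by
  simp [regularShift, Finsupp.domCongr_apply, equivMapDomain_single]

lemma regularShift_mul (g h : G) (f : G →₀ ℤ) :
    regularShift (g * h) f = regularShift g (regularShift h f) := by ext; simp [mul_assoc]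

noncomputable def twistedForm (χ : G →* ℤˣ) (γ : G → ℤ) : (G →₀ ℤ) →+ (G →₀ ℤ) →+ ℤ :=
  liftAddHom fun x => zmultiplesHom _ <|
    liftAddHom fun y => zmultiplesHom ℤ ((χ y : ℤ) * γ (x * y⁻¹))

variable (χ : G →* ℤˣ) (γ : G → ℤ)

lemma twistedForm_single_single (x y : G) (m n : ℤ) :
    twistedForm χ γ (single x m) (single y n) = m * n * ((χ y : ℤ) * γ (x * y⁻¹)) := by
  simp [twistedForm, mul_assoc]

lemma twistedForm_apply (f f' : G →₀ ℤ) :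
    twistedForm χ γ f f' =
      f.sum fun x m => f'.sum fun y n => m * n * ((χ y : ℤ) * γ (x * y⁻¹)) := by
  simp [twistedForm, liftAddHom_apply, Finsupp.sum, AddMonoidHom.finsetSum_apply,
    Finset.mul_sum, mul_assoc]

variable {χ γ} in
lemma twistedForm_eq_zero {f f' : G →₀ ℤ}
    (h : ∀ x ∈ f.support, ∀ y ∈ f'.support, γ (x * y⁻¹) = 0) : twistedForm χ γ f f' = 0 := by
  rw [twistedForm_apply]
  exact Finset.sum_eq_zero fun x hx => Finset.sum_eq_zero fun y hy => by simp [h x hx y hy]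

lemma twistedForm_regularShift (g : G) (f f' : G →₀ ℤ) :
    twistedForm χ γ (regularShift g f) (regularShift g f') = χ g • twistedForm χ γ f f' := by
  induction f using Finsupp.induction_linear with
  | zero => simp
  | add => simp [*, smul_add]
  | single x m =>
    induction f' using Finsupp.induction_linear with
    | zero => simp
    | add => simp [*, smul_add]
    | single y n =>
      have hxy : x * g⁻¹ * (y * g⁻¹)⁻¹ = x * y⁻¹ := by group
      simp only [regularShift_single, twistedForm_single_single, hxy, map_mul, map_inv,
        Int.units_inv_eq_self, Units.smul_def, smul_eq_mul, Units.val_mul]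
      ring

noncomputable def twistedAction : G →* MulAut (BilinearExtension (twistedForm χ γ)) where
  toFun g := BilinearExtension.congr (regularShift g) (DistribMulAction.toAddEquiv ℤ (χ g))
    (twistedForm_regularShift χ γ g)
  map_one' := by ext <;> simp
  map_mul' g h := by
    ext x : 1
    exact BilinearExtension.ext (regularShift_mul g h x.base)
      (show χ (g * h) • x.center = χ g • χ h • x.center by rw [map_mul, mul_smul])

@[simp] lemma twistedAction_apply (g : G) (x : BilinearExtension (twistedForm χ γ)) :
    twistedAction χ γ g x = ⟨regularShift g x.base, χ g • x.center⟩ := rfl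

abbrev TwistedWreath := BilinearExtension (twistedForm χ γ) ⋊[twistedAction χ γ] G

noncomputable def TwistedWreath.toWreath :
    TwistedWreath χ γ →* Multiplicative (G →₀ ℤ) ⋊[wreathAction G] G :=
  SemidirectProduct.map BilinearExtension.baseHom (MonoidHom.id G) fun _ => by ext; rfl

variable {ι : Type*} (s : ι → G)

noncomputable def wreathLift :
    FreeGroup (Option ι) →* Multiplicative (G →₀ ℤ) ⋊[wreathAction G] G :=
  FreeGroup.lift fun a => a.elim (inl (.ofAdd (single 1 1))) fun i => inr (s i)

noncomputable def twistedLift : FreeGroup (Option ι) →* TwistedWreath χ γ :=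
  FreeGroup.lift fun a => a.elim (inl ⟨single 1 1, 0⟩) fun i => inr (s i)

lemma wreathLift_of_none :
    wreathLift s (.of none) = inl (Multiplicative.ofAdd (single 1 1)) := by
  simp [wreathLift]

lemma twistedLift_of_none : twistedLift χ γ s (.of none) = inl ⟨single 1 1, 0⟩ := by
  simp [twistedLift]

lemma toWreath_comp_twistedLift :
    (TwistedWreath.toWreath χ γ).comp (twistedLift χ γ s) = wreathLift s := by
  ext a : 1
  cases a <;> simp [twistedLift, wreathLift, TwistedWreath.toWreath]

lemma twistedLift_left_base (w : FreeGroup (Option ι)) :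
    (twistedLift χ γ s w).left.base = Multiplicative.toAdd (wreathLift s w).left := by
  rw [← toWreath_comp_twistedLift χ γ s]; rfl

lemma twistedLift_right (w : FreeGroup (Option ι)) :
    (twistedLift χ γ s w).right = (wreathLift s w).right := by
  rw [← toWreath_comp_twistedLift χ γ s]; rfl

lemma twistedLift_eq_one {w : FreeGroup (Option ι)} (hw : wreathLift s w = 1)
    (hz : (twistedLift χ γ s w).left.center = 0) : twistedLift χ γ s w = 1 := by
  have hbase := twistedLift_left_base χ γ s w
  have hright := twistedLift_right χ γ s w
  rw [hw] at hbase hright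
  ext : 2
  · exact hbase
  · exact hz
  · exact hright

lemma exists_finset_center_twistedLift_eq_zero (w : FreeGroup (Option ι)) :
    ∃ B : Finset G, ∀ (χ : G →* ℤˣ) (γ : G → ℤ), (∀ b ∈ B, γ b = 0) →
      (twistedLift χ γ s w).left.center = 0 := by
  classical
  induction w using FreeGroup.induction_on with
  | C1 => exact ⟨∅, fun χ γ _ => rfl⟩
  | of a => exact ⟨∅, fun χ γ _ => by cases a <;> simp [twistedLift]⟩
  | inv_of a _ =>
    refine ⟨{1}, fun χ γ hB => ?_⟩
    cases a <;> simp [twistedLift, twistedForm_single_single, hB]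
  | mul x y hx hy =>
    obtain ⟨Bx, hBx⟩ := hx
    obtain ⟨By, hBy⟩ := hy
    let fx := Multiplicative.toAdd (wreathLift s x).left
    let fy := regularShift (wreathLift s x).right (Multiplicative.toAdd (wreathLift s y).left)
    refine ⟨Bx ∪ By ∪ (fx.support ×ˢ fy.support).image fun p => p.1 * p.2⁻¹,
      fun χ γ hB => ?_⟩
    have hβ : twistedForm χ γ fx fy = 0 := twistedForm_eq_zero fun a ha b hb =>
      hB _ (Finset.mem_union_right _
        (Finset.mem_image.2 ⟨(a, b), Finset.mem_product.2 ⟨ha, hb⟩, rfl⟩))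
    simp only [map_mul, mul_left, twistedAction_apply, BilinearExtension.mul_center,
      twistedLift_left_base, twistedLift_right]
    rw [hBx χ γ fun b hb => hB b (by simp [hb]), hBy χ γ fun b hb => hB b (by simp [hb])]
    simpa using hβ

variable {s}

lemma wreathLift_commutator_conj_eq_one {u : FreeGroup (Option ι)} {t : G}
    (hu : wreathLift s u = inr t) : wreathLift s ⁅u * .of none * u⁻¹, .of none⁆ = 1 := by
  rw [map_commutatorElement, commutatorElement_eq_one_iff_mul_comm, map_mul, map_mul, map_inv,
    hu, ← map_inv, wreathLift_of_none, ← inl_aut, ← map_mul, ← map_mul, mul_comm]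

lemma twistedLift_commutator_conj {u : FreeGroup (Option ι)} {t : G}
    (hu : wreathLift s u = inr t) :
    (twistedLift χ γ s ⁅u * .of none * u⁻¹, .of none⁆).left.center = γ t⁻¹ - χ t * γ t := by
  have hbase : (twistedLift χ γ s u).left.base = 0 := by
    rw [twistedLift_left_base, hu]; rfl
  have hright : (twistedLift χ γ s u).right = t := by
    rw [twistedLift_right, hu]; rfl
  have hconj : twistedLift χ γ s (u * .of none * u⁻¹) = inl ⟨single t⁻¹ 1, 0⟩ := by
    rw [map_mul, map_mul, map_inv, twistedLift_of_none]
    generalize twistedLift χ γ s u = a at hbase hright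
    obtain ⟨l, r⟩ := a
    subst hright
    have hcomm := BilinearExtension.commute_of_base_eq_zero hbase
      (twistedAction χ γ r ⟨single 1 1, 0⟩)
    rw [mk_eq_inl_mul_inr,
      show inl l * inr r * inl ⟨single 1 1, 0⟩ * (inl l * inr r)⁻¹ =
        inl l * (inr r * inl ⟨single 1 1, 0⟩ * (inr r)⁻¹) * (inl l)⁻¹ by group,
      ← map_inv inr, ← inl_aut, ← map_inv, ← map_mul, ← map_mul, hcomm.mul_inv_cancel]
    simp [regularShift_single]
  rw [map_commutatorElement, hconj, twistedLift_of_none, ← map_commutatorElement,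
    BilinearExtension.commutatorElement_mk]
  simp [twistedForm_single_single]

lemma inr_mem_range_wreathLift (hs : Subgroup.closure (Set.range s) = ⊤) (g : G) : inr g ∈ (wreathLift s).range := by
  suffices Subgroup.closure (Set.range s) ≤ (wreathLift s).range.comap inr by
    exact this (hs ▸ Subgroup.mem_top g)
  rw [Subgroup.closure_le]
  rintro _ ⟨i, rfl⟩
  exact ⟨.of (some i), by simp [wreathLift]⟩

lemma inl_mem_range_wreathLift (hs : Subgroup.closure (Set.range s) = ⊤)
    (m : Multiplicative (G →₀ ℤ)) :
    inl m ∈ (wreathLift s).range := by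
  have hsingle (x : G) (n : ℤ) :
      inl (Multiplicative.ofAdd (single x n)) ∈ (wreathLift s).range := by
    have hδ : wreathLift s (.of none) ^ n = inl (Multiplicative.ofAdd (single 1 n)) := by
      simp [wreathLift_of_none, ← map_zpow, ← ofAdd_zsmul]
    have hconj : (inl (Multiplicative.ofAdd (single x n)) :
          Multiplicative (G →₀ ℤ) ⋊[wreathAction G] G) =
        inr x⁻¹ * inl (Multiplicative.ofAdd (single 1 n)) * inr x⁻¹⁻¹ := by
      rw [← inl_aut]
      simp [wreathAction, Finsupp.domCongr_apply, equivMapDomain_single]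
    rw [hconj, ← hδ]
    exact mul_mem (mul_mem (inr_mem_range_wreathLift hs _)
      (zpow_mem (MonoidHom.mem_range.2 ⟨_, rfl⟩) n)) (inr_mem_range_wreathLift hs _)
  suffices ∀ f : G →₀ ℤ, inl (Multiplicative.ofAdd f) ∈ (wreathLift s).range from
    this m.toAdd
  intro f
  induction f using Finsupp.induction_linear with
  | zero => exact one_mem _
  | add f f' hf hf' => rw [ofAdd_add, map_mul]; exact mul_mem hf hf'
  | single x n => exact hsingle x n

lemma wreathLift_surjective (hs : Subgroup.closure (Set.range s) = ⊤) :
    Function.Surjective (wreathLift s) := fun x =>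
  inl_left_mul_inr_right x ▸
    mul_mem (inl_mem_range_wreathLift hs x.left) (inr_mem_range_wreathLift hs x.right)

variable {χ γ} in
lemma ker_wreathLift_not_le_ker_twistedLift (hs : Subgroup.closure (Set.range s) = ⊤) {t : G}
    (ht : γ t⁻¹ ≠ χ t * γ t) :
    ¬ (wreathLift s).ker ≤ (twistedLift χ γ s).ker := by
  intro hker
  obtain ⟨u, hu⟩ := wreathLift_surjective hs (inr t)
  have hc := hker (wreathLift_commutator_conj_eq_one hu)
  rw [MonoidHom.mem_ker] at hc
  have := twistedLift_commutator_conj χ γ hu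
  rw [hc] at this
  exact ht (sub_eq_zero.1 this.symm)

end TwistedWreath

theorem wreathZ_fg_not_fp (G : Type*) [Group G] [Infinite G] (hG : Group.FG G) :
    Group.FG (WreathZ G) ∧ ¬ Group.IsFinitelyPresented' (WreathZ G) := by
  classical
  obtain ⟨S, hS, hSfin⟩ := Group.fg_iff.1 hG
  have : Finite S := hSfin.to_subtype
  have hs : Subgroup.closure (Set.range ((↑) : S → G)) = ⊤ := by rwa [Subtype.range_coe]
  refine ⟨Group.fg_of_surjective (wreathLift_surjective hs), fun hFP => ?_⟩
  obtain ⟨T, hTfin, hT⟩ := hFP.ker_isFinitelyNormallyGenerated _ (wreathLift_surjective hs)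
  choose B hB using exists_finset_center_twistedLift_eq_zero ((↑) : S → G)
  obtain ⟨t, χ, γ, hγB, ht⟩ := exists_twist (hTfin.toFinset.biUnion B)
  refine ker_wreathLift_not_le_ker_twistedLift hs ht (hT ▸ Subgroup.normalClosure_le_normal ?_)
  intro w hw
  have hρw : w ∈ (wreathLift _).ker := hT ▸ Subgroup.subset_normalClosure hw
  refine twistedLift_eq_one χ γ _ hρw (hB w χ γ fun b hb => ?_)
  exact hγB b (Finset.mem_biUnion.2 ⟨w, hTfin.mem_toFinset.2 hw, hb⟩)
end

section
/- In the Baumslag–Solitar group G = BS(2,3) = ⟨a, b ∣ a⁻¹b²a = b³⟩, the assignment a ↦ a, b ↦ b² extends to a surjective group endomorphism π: G → G, and the commutator [a⁻¹ba, b] is a nontrivial element of ker π; hence G is not Hopfian. -/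
/-- The defining relation of the Baumslag–Solitar group `BS(2,3)`:
`a⁻¹ b² a = b³`, i.e. `a⁻¹ b² a (b³)⁻¹ = 1`. -/
def bsRels : Set (FreeGroup (Fin 2)) :=
  {(FreeGroup.of 0)⁻¹ * (FreeGroup.of 1) ^ 2 * FreeGroup.of 0 * ((FreeGroup.of 1) ^ 3)⁻¹}

/-- The Baumslag–Solitar group `BS(2,3) = ⟨a, b ∣ a⁻¹b²a = b³⟩`. -/
def BS23 := PresentedGroup bsRels

instance : Group BS23 := inferInstanceAs (Group (PresentedGroup bsRels))

/-- The generator `a` of `BS(2,3)`. -/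
def BS23.a : BS23 := PresentedGroup.of 0

/-- The generator `b` of `BS(2,3)`. -/
def BS23.b : BS23 := PresentedGroup.of 1

/-!
`π : a ↦ a, b ↦ b²` respects the relation, since conjugation by `a` sends `b⁴ = (b²)²` to
`(b³)² = (b²)³`. It is onto because `π (a⁻¹ b a b⁻¹) = a⁻¹ b² a b⁻² = b`, and it kills
`c = [a⁻¹ b a, b]` because `π (a⁻¹ b a) = b³` commutes with `π b = b²`.

To see `c ≠ 1`, let `BS(2,3)` act on `ℝ` with `b` the translation by `1` and `a` a bijection `A`
satisfying `A (x + 3) = A x + 2`, obtained by extending a bijection `[0, 3) → [0, 2)`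
periodically. If `A` were affine, `a⁻¹ b a` would be a translation and commute with `b`; taking
`A` piecewise linear with slopes `1` on `[0, 1]` and `1/2` on `[1, 3]`, the two products
`a⁻¹ b a b` and `b a⁻¹ b a` send `0` to `3` and to `2` respectively.
-/

open Set Function
open scoped commutatorElement

noncomputable section

section PeriodicExtension

def periodicExtension {p : ℝ} (hp : 0 < p) (q : ℝ) (g : ℝ → ℝ) (x : ℝ) : ℝ :=
  toIcoDiv hp 0 x • q + g (toIcoMod hp 0 x)

variable {p q : ℝ} (hp : 0 < p) (hq : 0 < q) {g h : ℝ → ℝ}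

theorem periodicExtension_zsmul_add (n : ℤ) {x : ℝ} (hx : x ∈ Ico 0 p) :
    periodicExtension hp q g (n • p + x) = n • q + g x := by
  have hx' : x ∈ Ico 0 (0 + p) := by rwa [zero_add]
  rw [periodicExtension, toIcoDiv_zsmul_add, toIcoMod_zsmul_add, (toIcoMod_eq_self hp).2 hx',
    (toIcoDiv_eq_iff hp (n := 0)).2 (by rwa [zero_smul, sub_zero]), add_zero]

theorem periodicExtension_of_mem_Ico {x : ℝ} (hx : x ∈ Ico 0 p) :
    periodicExtension hp q g x = g x := by
  simpa using periodicExtension_zsmul_add hp (q := q) (g := g) 0 hx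

theorem periodicExtension_add_period (x : ℝ) :
    periodicExtension hp q g (x + p) = periodicExtension hp q g x + q := by
  simp only [periodicExtension, toIcoDiv_add_right, toIcoMod_add_right, add_smul, one_smul]
  ring

include hq in
theorem periodicExtension_leftInverse (hg : MapsTo g (Ico 0 p) (Ico 0 q))
    (hinv : LeftInvOn h g (Ico 0 p)) :
    LeftInverse (periodicExtension hq p h) (periodicExtension hp q g) := by
  intro x
  have hs : toIcoMod hp 0 x ∈ Ico 0 p := by simpa using toIcoMod_mem_Ico hp 0 x
  calc periodicExtension hq p h (periodicExtension hp q g x)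
      = toIcoDiv hp 0 x • p + h (g (toIcoMod hp 0 x)) := periodicExtension_zsmul_add hq _ (hg hs)
    _ = x := by rw [hinv hs, add_comm, toIcoMod_add_toIcoDiv_zsmul]

def periodicExtensionPerm (hg : MapsTo g (Ico 0 p) (Ico 0 q)) (hh : MapsTo h (Ico 0 q) (Ico 0 p))
    (hinv : InvOn h g (Ico 0 p) (Ico 0 q)) : Equiv.Perm ℝ where
  toFun := periodicExtension hp q g
  invFun := periodicExtension hq p h
  left_inv := periodicExtension_leftInverse hp hq hg hinv.1
  right_inv := periodicExtension_leftInverse hq hp hh hinv.2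

end PeriodicExtension

section Kink

def kink (r : ℝ) : ℝ := min r ((r + 1) / 2)

def kinkInv (s : ℝ) : ℝ := max s (2 * s - 1)

theorem mapsTo_kink : MapsTo kink (Ico 0 3) (Ico 0 2) := by
  rintro r ⟨h0, h3⟩
  exact ⟨le_min h0 (by linarith), (min_le_right _ _).trans_lt (by linarith)⟩

theorem mapsTo_kinkInv : MapsTo kinkInv (Ico 0 2) (Ico 0 3) := by
  rintro s ⟨h0, h2⟩
  exact ⟨h0.trans (le_max_left _ _), max_lt (by linarith) (by linarith)⟩

theorem invOn_kinkInv_kink : InvOn kinkInv kink (Ico 0 3) (Ico 0 2) := by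
  constructor
  · intro r _
    rcases le_total r 1 with hr | hr
    · rw [kink, min_eq_left (by linarith), kinkInv, max_eq_left (by linarith)]
    · rw [kink, min_eq_right (by linarith), kinkInv, max_eq_right (by linarith)]
      ring
  · intro s _
    rcases le_total s 1 with hs | hs
    · rw [kinkInv, max_eq_left (by linarith), kink, min_eq_left (by linarith)]
    · rw [kinkInv, max_eq_right (by linarith), kink, min_eq_right (by linarith)]
      ring

def kinkPerm : Equiv.Perm ℝ :=
  periodicExtensionPerm three_pos two_pos mapsTo_kink mapsTo_kinkInv invOn_kinkInv_kink

theorem kinkPerm_add_three (x : ℝ) : kinkPerm (x + 3) = kinkPerm x + 2 :=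
  periodicExtension_add_period three_pos x

theorem kinkPerm_of_mem_Icc {x : ℝ} (h0 : 0 ≤ x) (h1 : x ≤ 1) : kinkPerm x = x :=
  (periodicExtension_of_mem_Ico three_pos ⟨h0, by linarith⟩).trans (min_eq_left (by linarith))

end Kink

namespace BS23

theorem relation : a⁻¹ * b ^ 2 * a = b ^ 3 :=
  PresentedGroup.mk_eq_mk_of_mul_inv_mem rfl

section Lift

variable {G : Type*} [Group G]

def lift (x y : G) (h : x⁻¹ * y ^ 2 * x = y ^ 3) : BS23 →* G :=
  PresentedGroup.toGroup (f := ![x, y]) <| by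
    rintro r rfl
    simpa [mul_inv_eq_one] using h

@[simp] theorem lift_a (x y : G) (h : x⁻¹ * y ^ 2 * x = y ^ 3) : lift x y h a = x :=
  PresentedGroup.toGroup.of _

@[simp] theorem lift_b (x y : G) (h : x⁻¹ * y ^ 2 * x = y ^ 3) : lift x y h b = y :=
  PresentedGroup.toGroup.of _

theorem surjective_of_mem_range (f : G →* BS23) (ha : a ∈ f.range) (hb : b ∈ f.range) :
    Surjective f :=
  fun y => PresentedGroup.generated_by _ f.range (Fin.forall_fin_two.2 ⟨ha, hb⟩) y

end Lift

def endo : BS23 →* BS23 :=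
  lift a (b ^ 2) <| calc
    a⁻¹ * (b ^ 2) ^ 2 * a = (a⁻¹ * b ^ 2 * a) ^ 2 := by simp only [sq]; group
    _ = (b ^ 2) ^ 3 := by rw [relation]; group

@[simp] theorem endo_a : endo a = a := lift_a ..

@[simp] theorem endo_b : endo b = b ^ 2 := lift_b ..

theorem endo_surjective : Surjective endo := by
  refine surjective_of_mem_range endo ⟨a, endo_a⟩ ⟨a⁻¹ * b * a * b⁻¹, ?_⟩
  simp only [map_mul, map_inv, endo_a, endo_b, relation]
  group

theorem endo_commutator : endo ((a⁻¹ * b * a)⁻¹ * b⁻¹ * (a⁻¹ * b * a) * b) = 1 := by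
  simp only [map_mul, map_inv, endo_a, endo_b, relation]
  group

def toPerm : BS23 →* Equiv.Perm ℝ :=
  lift kinkPerm (Equiv.addRight 1) <| by
    ext x
    simp only [Equiv.Perm.mul_apply, pow_succ, pow_zero, one_mul]
    rw [Equiv.Perm.inv_eq_iff_eq]
    simp only [Equiv.coe_addRight]
    rw [show x + 1 + 1 + 1 = x + 3 by ring, kinkPerm_add_three]
    ring

@[simp] theorem toPerm_a : toPerm a = kinkPerm := lift_a ..

@[simp] theorem toPerm_b : toPerm b = Equiv.addRight 1 := lift_b ..

theorem not_commute_conj_b_b : ¬Commute (a⁻¹ * b * a) b := by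
  have hA0 : kinkPerm 0 = 0 := kinkPerm_of_mem_Icc le_rfl zero_le_one
  have hA1 : kinkPerm 1 = 1 := kinkPerm_of_mem_Icc zero_le_one le_rfl
  have hA3 : kinkPerm 3 = 2 := by simpa [hA0] using kinkPerm_add_three 0
  have hA_inv_one : kinkPerm⁻¹ 1 = 1 := by rw [Equiv.Perm.inv_eq_iff_eq, hA1]
  have hA_inv_two : kinkPerm⁻¹ 2 = 3 := by rw [Equiv.Perm.inv_eq_iff_eq, hA3]
  intro h
  have h0 := congrArg (fun σ => σ 0) (congrArg toPerm h.eq)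
  simp only [map_mul, map_inv, toPerm_a, toPerm_b, Equiv.Perm.mul_apply, Equiv.coe_addRight,
    zero_add, hA0, hA1, one_add_one_eq_two, hA_inv_one, hA_inv_two] at h0
  norm_num at h0

theorem commutator_ne_one : (a⁻¹ * b * a)⁻¹ * b⁻¹ * (a⁻¹ * b * a) * b ≠ 1 := by
  have hc : (a⁻¹ * b * a)⁻¹ * b⁻¹ * (a⁻¹ * b * a) * b = ⁅(a⁻¹ * b * a)⁻¹, b⁻¹⁆ := by
    rw [commutatorElement_def, inv_inv, inv_inv]
  rw [hc, Ne, commutatorElement_eq_one_iff_commute, Commute.inv_inv_iff]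
  exact not_commute_conj_b_b

end BS23

theorem bs23_not_hopfian :
    ∃ π : BS23 →* BS23, π BS23.a = BS23.a ∧ π BS23.b = BS23.b ^ 2 ∧
      Function.Surjective π ∧
      (BS23.a⁻¹ * BS23.b * BS23.a)⁻¹ * BS23.b⁻¹ * (BS23.a⁻¹ * BS23.b * BS23.a) * BS23.b ≠ 1 ∧
      π ((BS23.a⁻¹ * BS23.b * BS23.a)⁻¹ * BS23.b⁻¹ * (BS23.a⁻¹ * BS23.b * BS23.a) * BS23.b)
        = 1 ∧
      ¬ Function.Injective π :=
  ⟨BS23.endo, BS23.endo_a, BS23.endo_b, BS23.endo_surjective, BS23.commutator_ne_one,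
    BS23.endo_commutator, fun hinj =>
      BS23.commutator_ne_one (hinj (BS23.endo_commutator.trans (map_one _).symm))⟩
end
end

section
/- Let K be a field of characteristic 0 and let L be a nonzero finite-dimensional Lie algebra over K with universal enveloping algebra U = U(L). Regard U as an abelian Lie algebra on which L acts by left multiplication. Then the semidirect product Lie algebra U ⋊ L is finitely generated but not finitely presented. -/
open UniversalEnvelopingAlgebra

/-- A Lie algebra is finitely generated if it is generated, as a Lie algebra,
by a finite set. -/
def LieAlgebra.IsFinitelyGenerated (K L : Type*) [CommRing K] [LieRing L]
    [LieAlgebra K L] : Prop :=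
  ∃ s : Finset L, LieSubalgebra.lieSpan K L ↑s = ⊤

/-- A Lie algebra is finitely presented if it is the quotient of a free Lie algebra on
finitely many generators by a finitely generated Lie ideal. -/
def LieAlgebra.IsFinitelyPresented (K L : Type*) [CommRing K] [LieRing L]
    [LieAlgebra K L] : Prop :=
  ∃ (n : ℕ) (π : FreeLieAlgebra K (Fin n) →ₗ⁅K⁆ L), Function.Surjective π ∧
    ∃ s : Finset (FreeLieAlgebra K (Fin n)),
      LieSubmodule.lieSpan K (FreeLieAlgebra K (Fin n)) ↑s = π.ker

section SemidirectConstruction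

variable (K : Type*) [CommRing K] (L : Type*) [LieRing L] [LieAlgebra K L]

/-- The underlying type of the semidirect product Lie algebra `U(L) ⋊ L`, where the
enveloping algebra `U(L)` is viewed as an abelian Lie algebra on which `L` acts by
left multiplication. -/
def LieSemidirect := UniversalEnvelopingAlgebra K L × L

namespace LieSemidirect

variable {K L}

instance : AddCommGroup (LieSemidirect K L) :=
  inferInstanceAs (AddCommGroup (UniversalEnvelopingAlgebra K L × L))

instance : Module K (LieSemidirect K L) :=
  inferInstanceAs (Module K (UniversalEnvelopingAlgebra K L × L))

/-- The semidirect product bracket: `U(L)` is an abelian Lie algebra, `L` has its own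
bracket, and `L` acts on `U(L)` by left multiplication:
`⁅(u, x), (v, y)⁆ = (x·v - y·u, ⁅x, y⁆)`. -/
noncomputable instance : LieRing (LieSemidirect K L) where
  bracket p q := (ι K p.2 * q.1 - ι K q.2 * p.1, ⁅p.2, q.2⁆)
  add_lie p q r := by
    refine Prod.ext ?_ ?_
    · show ι K (p.2 + q.2) * r.1 - ι K r.2 * (p.1 + q.1)
        = (ι K p.2 * r.1 - ι K r.2 * p.1) + (ι K q.2 * r.1 - ι K r.2 * q.1)
      simp only [map_add, add_mul, mul_add]
      abel
    · exact add_lie p.2 q.2 r.2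
  lie_add p q r := by
    refine Prod.ext ?_ ?_
    · show ι K p.2 * (q.1 + r.1) - ι K (q.2 + r.2) * p.1
        = (ι K p.2 * q.1 - ι K q.2 * p.1) + (ι K p.2 * r.1 - ι K r.2 * p.1)
      simp only [map_add, add_mul, mul_add]
      abel
    · exact lie_add p.2 q.2 r.2
  lie_self p := by
    refine Prod.ext ?_ ?_
    · exact sub_self _
    · exact lie_self p.2
  leibniz_lie p q r := by
    refine Prod.ext ?_ ?_
    · show ι K p.2 * (ι K q.2 * r.1 - ι K r.2 * q.1) - ι K ⁅q.2, r.2⁆ * p.1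
        = (ι K ⁅p.2, q.2⁆ * r.1 - ι K r.2 * (ι K p.2 * q.1 - ι K q.2 * p.1))
          + (ι K q.2 * (ι K p.2 * r.1 - ι K r.2 * p.1) - ι K ⁅p.2, r.2⁆ * q.1)
      simp only [LieHom.map_lie, Ring.lie_def]
      noncomm_ring
    · exact leibniz_lie p.2 q.2 r.2

noncomputable instance : LieAlgebra K (LieSemidirect K L) where
  lie_smul t p q := by
    refine Prod.ext ?_ ?_
    · show ι K p.2 * (t • q.1) - ι K (t • q.2) * p.1 = t • (ι K p.2 * q.1 - ι K q.2 * p.1)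
      simp [mul_smul_comm, smul_mul_assoc, smul_sub]
    · exact lie_smul t p.2 q.2

end LieSemidirect

end SemidirectConstruction

/-!
`U(L) ⋊ L` is generated by `(1, 0)` and a basis of `L`: bracketing with `(0, x)` is left
multiplication by `ι x` on `U(L)`, and the `ι x` generate `U(L)`.

It is not finitely presented. With `S` the antipode of `U(L)`, `(u, v) ↦ S(u) v - S(v) u`
is a 2-cocycle on `U(L) ⋊ L` with values in the trivial module `U(L)`. Along a presentation
`F → U(L) ⋊ L` by a free Lie algebra it pulls back to `f ∘ ⁅·, ·⁆` for a linear `f`, which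
vanishes on `⁅F, R⁆`; so if the relation ideal `R` is generated by finitely many relators, `f`
maps `R` into a finitely generated submodule. Any commuting pair lifts to a bracket in `R`, and
on the commuting pair `(1, 0)`, `(t ^ m, 0)` with `t = ι x ≠ 0` and `m` odd the cocycle is
`2 t ^ m`. As `t` is primitive for the comultiplication, its powers are linearly independent in
characteristic zero.
-/

open scoped TensorProduct
open LieModule.Cohomology LieAlgebra

theorem LinearIndependent.exists_dual_apply_eq_ite {K V ι : Type*} [Field K] [AddCommGroup V]
    [Module K V] [DecidableEq ι] {v : ι → V} (hv : LinearIndependent K v) (i : ι) :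
    ∃ g : Module.Dual K V, ∀ j, g (v j) = if i = j then 1 else 0 := by
  obtain ⟨g, hg⟩ := LinearMap.exists_extend ((Module.Basis.span hv).coord i)
  refine ⟨g, fun j => ?_⟩
  have hj : v j = (Module.Basis.span hv j : V) := by rw [Module.Basis.span_apply]
  rw [hj, ← Submodule.subtype_apply, ← LinearMap.comp_apply, hg, Module.Basis.coord_apply,
    Module.Basis.repr_self, Finsupp.single_apply]
  exact if_congr eq_comm rfl rfl

theorem tmul_one_add_one_tmul_pow {K A : Type*} [CommRing K] [Ring A] [Algebra K A] (t : A)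
    (m : ℕ) :
    (t ⊗ₜ[K] (1 : A) + 1 ⊗ₜ t) ^ m =
      ∑ i ∈ Finset.range (m + 1), (m.choose i : K) • ((t ^ i) ⊗ₜ[K] (t ^ (m - i))) := by
  have hcomm : Commute (t ⊗ₜ[K] (1 : A)) (1 ⊗ₜ t) := by
    simp [Commute, SemiconjBy, Algebra.TensorProduct.tmul_mul_tmul]
  rw [hcomm.add_pow]
  refine Finset.sum_congr rfl fun i _ => ?_
  rw [Algebra.TensorProduct.tmul_pow, Algebra.TensorProduct.tmul_pow, one_pow, one_pow,
    Algebra.TensorProduct.tmul_mul_tmul, mul_one, one_mul, ← Nat.cast_comm, ← nsmul_eq_mul,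
    ← Nat.cast_smul_eq_nsmul K]

section PrimitivePowers

variable {K A : Type*} [Field K] [Ring A] [Algebra K A] {Δ : A →ₐ[K] A ⊗[K] A}
  {ε : A →ₐ[K] K} {t : A}

theorem pow_notMem_span_pow_lt_add_two [CharZero K] (hΔ : Δ t = t ⊗ₜ 1 + 1 ⊗ₜ t) {m : ℕ}
    (hind : LinearIndepOn K (t ^ ·) (Set.Iio (m + 2))) :
    t ^ (m + 2) ∉ Submodule.span K ((t ^ ·) '' Set.Iio (m + 2)) := by
  obtain ⟨g₁, hg₁⟩ := hind.exists_dual_apply_eq_ite ⟨1, by simp⟩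
  obtain ⟨g₂, hg₂⟩ := hind.exists_dual_apply_eq_ite ⟨m + 1, by simp⟩
  replace hg₁ (j : ℕ) (hj : j < m + 2) : g₁ (t ^ j) = if j = 1 then 1 else 0 := by
    simpa [Subtype.ext_iff, eq_comm] using hg₁ ⟨j, hj⟩
  replace hg₂ (j : ℕ) (hj : j < m + 2) : g₂ (t ^ j) = if j = m + 1 then 1 else 0 := by
    simpa [Subtype.ext_iff, eq_comm] using hg₂ ⟨j, hj⟩
  -- `Φ` reads off the coefficient of `t ⊗ t ^ (m + 1)` in `Δ (t ^ k)`, which is `0` for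
  -- `k < m + 2` and `m + 2` for `k = m + 2`.
  let Φ : A →ₗ[K] K := LinearMap.mul' K K ∘ₗ TensorProduct.map g₁ g₂ ∘ₗ Δ.toLinearMap
  have hΦ (k : ℕ) : Φ (t ^ k) =
      ∑ i ∈ Finset.range (k + 1), (k.choose i : K) * (g₁ (t ^ i) * g₂ (t ^ (k - i))) := by
    simp [Φ, map_pow, hΔ, tmul_one_add_one_tmul_pow]
  have hlow : Submodule.span K ((t ^ ·) '' Set.Iio (m + 2)) ≤ LinearMap.ker Φ := by
    rw [Submodule.span_le]
    rintro _ ⟨k, hk, rfl⟩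
    rw [SetLike.mem_coe, LinearMap.mem_ker, hΦ]
    refine Finset.sum_eq_zero fun i hi => ?_
    simp only [Set.mem_Iio] at hk
    simp only [Finset.mem_range] at hi
    rw [hg₁ i (by omega), hg₂ (k - i) (by omega)]
    split_ifs <;> first | omega | simp
  have htop : Φ (t ^ (m + 2)) = (m + 2 : ℕ) := by
    rw [hΦ, Finset.sum_eq_single 1]
    · rw [Nat.choose_one_right, hg₁ 1 (by omega), hg₂ (m + 2 - 1) (by omega)]
      simp
    · intro i hi hi1
      simp only [Finset.mem_range] at hi
      rcases Nat.lt_or_ge i (m + 2) with h | h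
      · simp [hg₁ i h, hi1]
      · have h0 := hg₂ 0 (by omega)
        rw [pow_zero] at h0
        simp [show m + 2 - i = 0 by omega, h0]
    · simp
  intro hmem
  have := hlow hmem
  rw [LinearMap.mem_ker, htop] at this
  exact absurd this (by exact_mod_cast (m + 1).succ_ne_zero)

theorem pow_notMem_span_pow_lt [CharZero K] (hΔ : Δ t = t ⊗ₜ 1 + 1 ⊗ₜ t) (hε : ε t = 0)
    (ht : t ≠ 0) {n : ℕ} (hind : LinearIndepOn K (t ^ ·) (Set.Iio n)) :
    t ^ n ∉ Submodule.span K ((t ^ ·) '' Set.Iio n) := by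
  match n, hind with
  | 0, _ =>
    intro hmem
    simp at hmem
    exact ht (by rw [← mul_one t, hmem, mul_zero])
  | 1, _ =>
    intro hmem
    simp [Submodule.mem_span_singleton] at hmem
    obtain ⟨a, rfl⟩ := hmem
    simp_all
  | m + 2, hind => exact pow_notMem_span_pow_lt_add_two hΔ hind

theorem linearIndependent_pow_of_primitive [CharZero K] (hΔ : Δ t = t ⊗ₜ 1 + 1 ⊗ₜ t)
    (hε : ε t = 0) (ht : t ≠ 0) : LinearIndependent K (t ^ · : ℕ → A) := by
  have hIio (n : ℕ) : LinearIndepOn K (t ^ ·) (Set.Iio n) := by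
    induction n with
    | zero => simp
    | succ n ih =>
      rw [← Order.succ_eq_add_one, Order.Iio_succ_eq_insert,
        linearIndepOn_insert Set.self_notMem_Iio]
      exact ⟨ih, pow_notMem_span_pow_lt hΔ hε ht ih⟩
  rw [← linearIndepOn_univ_iff, ← Set.iUnion_Iio]
  exact linearIndepOn_iUnion_of_directed (Monotone.directed_le fun _ _ => Set.Iio_subset_Iio) hIio

end PrimitivePowers

theorem LieSubmodule.apply_mem_span_image_of_mem_lieSpan {R F M : Type*} [CommRing R]
    [LieRing F] [LieAlgebra R F] [AddCommGroup M] [Module R M] {s : Set F} (f : F →ₗ[R] M)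
    (hf : ∀ x : F, ∀ r ∈ lieSpan R F s, f ⁅x, r⁆ = 0) {r : F} (hr : r ∈ lieSpan R F s) :
    f r ∈ Submodule.span R (f '' s) := by
  induction hr using LieSubmodule.lieSpan_induction with
  | mem x hx => exact Submodule.subset_span (Set.mem_image_of_mem f hx)
  | zero => simp
  | add x y _ _ hx hy => simpa using Submodule.add_mem _ hx hy
  | smul a x _ hx => simpa using Submodule.smul_mem _ a hx
  | lie x y hy _ => simp [hf x y hy]

theorem FreeLieAlgebra.exists_linearMap_lie_eq_twoCocycle {R X 𝔤 M : Type*} [CommRing R]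
    [LieRing 𝔤] [LieAlgebra R 𝔤] [AddCommGroup M] [Module R M] [LieRingModule 𝔤 M]
    [LieModule R 𝔤 M] [LieModule.IsTrivial 𝔤 M] (π : FreeLieAlgebra R X →ₗ⁅R⁆ 𝔤)
    (c : twoCocycle R 𝔤 M) :
    ∃ f : FreeLieAlgebra R X →ₗ[R] M,
      ∀ a b, f ⁅a, b⁆ = (c : 𝔤 →ₗ[R] 𝔤 →ₗ[R] M) (π a) (π b) := by
  let lift : FreeLieAlgebra R X →ₗ⁅R⁆ ofTwoCocycle c :=
    FreeLieAlgebra.lift R fun i => ofProd c (π (FreeLieAlgebra.of R i), 0)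
  let proj : ofTwoCocycle c →ₗ⁅R⁆ 𝔤 :=
    { toFun := fun x => ((ofProd c).symm x).1
      map_add' := by simp
      map_smul' := by simp
      map_lie' := by simp [bracket_ofTwoCocycle] }
  have hproj : proj.comp lift = π :=
    FreeLieAlgebra.hom_ext fun i => by
      simp only [LieHom.comp_apply, lift, FreeLieAlgebra.lift_of_apply]
      rfl
  refine ⟨{ toFun := fun a => ((ofProd c).symm (lift a)).2
            map_add' := by simp
            map_smul' := by simp }, fun a b => ?_⟩
  have h (a) : ((ofProd c).symm (lift a)).1 = π a := LieHom.congr_fun hproj a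
  simp [bracket_ofTwoCocycle, h, trivial_lie_zero]

theorem LieAlgebra.IsFinitelyPresented.exists_fg_twoCocycle_mem_of_lie_eq_zero
    {R 𝔤 M : Type*} [CommRing R] [LieRing 𝔤] [LieAlgebra R 𝔤] [AddCommGroup M] [Module R M]
    [LieRingModule 𝔤 M] [LieModule R 𝔤 M] [LieModule.IsTrivial 𝔤 M]
    (h𝔤 : IsFinitelyPresented R 𝔤) (c : twoCocycle R 𝔤 M) :
    ∃ N : Submodule R M, N.FG ∧
      ∀ x y : 𝔤, ⁅x, y⁆ = 0 → (c : 𝔤 →ₗ[R] 𝔤 →ₗ[R] M) x y ∈ N := by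
  obtain ⟨n, π, hπ, s, hs⟩ := h𝔤
  obtain ⟨f, hf⟩ := FreeLieAlgebra.exists_linearMap_lie_eq_twoCocycle π c
  have hker : ∀ x : FreeLieAlgebra R (Fin n), ∀ r ∈ π.ker, f ⁅x, r⁆ = 0 := by
    intro x r hr
    simp [hf, LieHom.mem_ker.mp hr]
  refine ⟨Submodule.span R (f '' s), Submodule.fg_span (s.finite_toSet.image f), ?_⟩
  intro x y hxy
  obtain ⟨a, rfl⟩ := hπ x
  obtain ⟨b, rfl⟩ := hπ y
  have hab : ⁅a, b⁆ ∈ π.ker := by rw [LieHom.mem_ker, LieHom.map_lie, hxy]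
  rw [← hs] at hker hab
  simpa [hf] using LieSubmodule.apply_mem_span_image_of_mem_lieSpan f hker hab

namespace UniversalEnvelopingAlgebra

attribute [local instance] LieRing.ofAssociativeRing

variable (K : Type*) [CommRing K] (L : Type*) [LieRing L] [LieAlgebra K L]

@[elab_as_elim]
theorem induction {C : UniversalEnvelopingAlgebra K L → Prop}
    (algebraMap : ∀ r, C (algebraMap K _ r)) (ι : ∀ x, C (ι K x))
    (mul : ∀ a b, C a → C b → C (a * b)) (add : ∀ a b, C a → C b → C (a + b))
    (u : UniversalEnvelopingAlgebra K L) : C u := by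
  obtain ⟨a, rfl⟩ : ∃ a, mkAlgHom K L a = u := RingCon.mkₐ_surjective _ u
  induction a using TensorAlgebra.induction with
  | algebraMap r => simpa using algebraMap r
  | ι x => exact ι x
  | mul a b ha hb => simpa using mul _ _ ha hb
  | add a b ha hb => simpa using add _ _ ha hb

noncomputable def antipodeOp :
    UniversalEnvelopingAlgebra K L →ₐ[K] (UniversalEnvelopingAlgebra K L)ᵐᵒᵖ :=
  lift K
    { toFun := fun x => MulOpposite.op (-ι K x)
      map_add' := fun x y => by simp [add_comm]
      map_smul' := fun r x => by simp
      map_lie' := fun {x y} => by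
        simp only [LieHom.map_lie, Ring.lie_def, ← MulOpposite.op_mul, ← MulOpposite.op_sub,
          neg_mul_neg, neg_sub] }

noncomputable def antipode : UniversalEnvelopingAlgebra K L →ₗ[K] UniversalEnvelopingAlgebra K L :=
  (MulOpposite.opLinearEquiv K).symm.toLinearMap ∘ₗ (antipodeOp K L).toLinearMap

variable {K L}

theorem antipode_apply (u : UniversalEnvelopingAlgebra K L) :
    antipode K L u = MulOpposite.unop (antipodeOp K L u) := rfl

@[simp] theorem antipode_one : antipode K L 1 = 1 := by simp [antipode_apply]

@[simp] theorem antipode_mul (a b : UniversalEnvelopingAlgebra K L) :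
    antipode K L (a * b) = antipode K L b * antipode K L a := by simp [antipode_apply]

@[simp] theorem antipode_pow (a : UniversalEnvelopingAlgebra K L) (m : ℕ) :
    antipode K L (a ^ m) = antipode K L a ^ m := by simp [antipode_apply]

@[simp] theorem antipode_ι (x : L) : antipode K L (ι K x) = -ι K x := by
  simp [antipode_apply, antipodeOp]

variable (K L)

noncomputable def counitAlgHom : UniversalEnvelopingAlgebra K L →ₐ[K] K := lift K 0

noncomputable def comulAlgHom : UniversalEnvelopingAlgebra K L →ₐ[K]
    UniversalEnvelopingAlgebra K L ⊗[K] UniversalEnvelopingAlgebra K L :=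
  lift K
    { toFun := fun x => ι K x ⊗ₜ 1 + 1 ⊗ₜ ι K x
      map_add' := fun x y => by
        simp only [map_add, TensorProduct.add_tmul, TensorProduct.tmul_add]
        abel
      map_smul' := fun r x => by simp [TensorProduct.smul_tmul', TensorProduct.tmul_smul]
      map_lie' := fun {x y} => by
        simp only [LieHom.map_lie, Ring.lie_def, mul_add, add_mul,
          Algebra.TensorProduct.tmul_mul_tmul, one_mul, mul_one, TensorProduct.sub_tmul,
          TensorProduct.tmul_sub]
        abel }

variable {K L}

@[simp] theorem counitAlgHom_ι (x : L) : counitAlgHom K L (ι K x) = 0 := by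
  simp [counitAlgHom]

@[simp] theorem comulAlgHom_ι (x : L) :
    comulAlgHom K L (ι K x) = ι K x ⊗ₜ 1 + 1 ⊗ₜ ι K x := by
  simp [comulAlgHom]

end UniversalEnvelopingAlgebra

attribute [local instance] LieRing.ofAssociativeRing in
theorem UniversalEnvelopingAlgebra.exists_ι_ne_zero (K L : Type*) [Field K] [LieRing L]
    [LieAlgebra K L] [Nontrivial L] : ∃ x : L, ι K x ≠ 0 := by
  by_cases hL : IsLieAbelian L
  · obtain ⟨x, hx⟩ := exists_ne (0 : L)
    obtain ⟨f, hf⟩ : ∃ f : Module.Dual K L, f x ≠ 0 := by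
      simpa using (Module.forall_dual_apply_eq_zero_iff K x).not.mpr hx
    let φ : L →ₗ⁅K⁆ K :=
      { f with map_lie' := fun {a b} => by simp [trivial_lie_zero, Ring.lie_def, mul_comm] }
    refine ⟨x, fun h => hf ?_⟩
    have := lift_ι_apply K φ x
    rw [h, map_zero] at this
    exact this.symm
  · obtain ⟨a, b, hab⟩ : ∃ a b : L, ⁅a, b⁆ ≠ 0 := by
      contrapose! hL
      exact ⟨hL⟩
    refine ⟨a, fun h => hab ?_⟩
    have := lift_ι_apply K (LieAlgebra.ad K L) a
    rw [h, map_zero] at this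
    simpa using LinearMap.congr_fun this.symm b

namespace LieSemidirect

variable {K : Type*} [CommRing K] {L : Type*} [LieRing L] [LieAlgebra K L]

theorem lie_def (p q : LieSemidirect K L) :
    ⁅p, q⁆ = (ι K p.2 * q.1 - ι K q.2 * p.1, ⁅p.2, q.2⁆) := rfl

variable (K L) in
def inl : UniversalEnvelopingAlgebra K L →ₗ[K] LieSemidirect K L := LinearMap.inl K _ _

variable (K L) in
def inr : L →ₗ[K] LieSemidirect K L := LinearMap.inr K _ _

variable (K L) in
def fst : LieSemidirect K L →ₗ[K] UniversalEnvelopingAlgebra K L := LinearMap.fst K _ _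

@[simp] theorem inl_fst (u : UniversalEnvelopingAlgebra K L) : (inl K L u).1 = u := rfl

theorem inl_add_inr (p : LieSemidirect K L) : inl K L p.1 + inr K L p.2 = p :=
  Prod.ext (add_zero p.1) (zero_add p.2)

theorem lie_inr_inl (x : L) (u : UniversalEnvelopingAlgebra K L) :
    ⁅inr K L x, inl K L u⁆ = inl K L (ι K x * u) := by
  show (ι K x * u - ι K 0 * 0, ⁅x, 0⁆) = (ι K x * u, (0 : L))
  simp

theorem lie_inl_inl (u v : UniversalEnvelopingAlgebra K L) : ⁅inl K L u, inl K L v⁆ = 0 := by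
  show (ι K 0 * v - ι K 0 * u, ⁅(0 : L), 0⁆) = ((0, 0) : UniversalEnvelopingAlgebra K L × L)
  simp

theorem isFinitelyGenerated [Module.Finite K L] :
    LieAlgebra.IsFinitelyGenerated K (LieSemidirect K L) := by
  classical
  obtain ⟨s, hs⟩ := Module.Finite.fg_top (R := K) (M := L)
  refine ⟨insert (inl K L 1) (s.image (inr K L)), ?_⟩
  set P := LieSubalgebra.lieSpan K (LieSemidirect K L)
    ↑(insert (inl K L 1) (s.image (inr K L)))
  have hinr (x : L) : inr K L x ∈ P := by
    have hx : x ∈ Submodule.span K (s : Set L) := hs ▸ Submodule.mem_top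
    refine Submodule.span_le (p := P.toSubmodule.comap (inr K L)) |>.mpr ?_ hx
    intro y hy
    exact LieSubalgebra.subset_lieSpan
      (Finset.mem_insert_of_mem (Finset.mem_image_of_mem _ hy))
  have hinl (a u : UniversalEnvelopingAlgebra K L) (hu : inl K L u ∈ P) : inl K L (a * u) ∈ P := by
    induction a using UniversalEnvelopingAlgebra.induction generalizing u with
    | algebraMap r =>
      rw [Algebra.algebraMap_eq_smul_one, smul_mul_assoc, one_mul, map_smul]
      exact P.smul_mem r hu
    | ι x =>
      rw [← lie_inr_inl]
      exact P.lie_mem (hinr x) hu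
    | mul a b ha hb => simpa [mul_assoc] using ha _ (hb u hu)
    | add a b ha hb => simpa [add_mul] using P.add_mem (ha u hu) (hb u hu)
  have h1 : inl K L 1 ∈ P := LieSubalgebra.subset_lieSpan (by simp)
  rw [eq_top_iff]
  rintro p -
  rw [← inl_add_inr p]
  exact P.add_mem (by simpa using hinl p.1 1 h1) (hinr p.2)

variable (K L) in
noncomputable def antipodeForm :
    UniversalEnvelopingAlgebra K L →ₗ[K] UniversalEnvelopingAlgebra K L →ₗ[K]
      UniversalEnvelopingAlgebra K L :=
  LinearMap.mul K _ ∘ₗ antipode K L - (LinearMap.mul K _ ∘ₗ antipode K L).flip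

@[simp] theorem antipodeForm_apply (u v : UniversalEnvelopingAlgebra K L) :
    antipodeForm K L u v = antipode K L u * v - antipode K L v * u := by
  simp [antipodeForm]

variable (K L) in
noncomputable def antipodeCocycle : twoCocycle K (LieSemidirect K L)
    (TrivialLieModule K (LieSemidirect K L) (UniversalEnvelopingAlgebra K L)) :=
  let B := ((antipodeForm K L).compl₁₂ (fst K L) (fst K L)).compr₂
    (TrivialLieModule.equiv K (LieSemidirect K L) _).symm.toLinearMap
  ⟨⟨B, fun p => by simp [B]⟩, (mem_twoCocycle_iff_of_trivial K _ _ _).mpr fun x y z => by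
    let e := (TrivialLieModule.equiv K (LieSemidirect K L) (UniversalEnvelopingAlgebra K L)).symm
    show e (antipodeForm K L x.1 (ι K y.2 * z.1 - ι K z.2 * y.1)) =
      e (antipodeForm K L (ι K x.2 * y.1 - ι K y.2 * x.1) z.1) +
        e (antipodeForm K L y.1 (ι K x.2 * z.1 - ι K z.2 * x.1))
    rw [← map_add]
    congr 1
    simp only [map_sub, LinearMap.sub_apply, antipodeForm_apply, antipode_mul, antipode_ι]
    noncomm_ring⟩

theorem antipodeCocycle_apply (p q : LieSemidirect K L) :
    (antipodeCocycle K L : LieSemidirect K L →ₗ[K] LieSemidirect K L →ₗ[K]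
      TrivialLieModule K (LieSemidirect K L) (UniversalEnvelopingAlgebra K L)) p q =
      (TrivialLieModule.equiv K _ _).symm (antipodeForm K L p.1 q.1) := rfl

theorem not_isFinitelyPresented (K L : Type*) [Field K] [CharZero K] [LieRing L]
    [LieAlgebra K L] [Nontrivial L] : ¬ LieAlgebra.IsFinitelyPresented K (LieSemidirect K L) := by
  intro hfp
  obtain ⟨N, ⟨w, hw⟩, hN⟩ := hfp.exists_fg_twoCocycle_mem_of_lie_eq_zero (antipodeCocycle K L)
  obtain ⟨x, hx⟩ := UniversalEnvelopingAlgebra.exists_ι_ne_zero K L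
  let e := (TrivialLieModule.equiv K (LieSemidirect K L) (UniversalEnvelopingAlgebra K L)).symm
  have hodd (j : ℕ) : e (ι K x ^ (2 * j + 1)) ∈ N := by
    have h := hN _ _ (lie_inl_inl 1 (ι K x ^ (2 * j + 1)))
    rw [antipodeCocycle_apply, inl_fst, inl_fst, antipodeForm_apply, antipode_one, antipode_pow,
      antipode_ι, Odd.neg_pow ⟨j, rfl⟩, one_mul, mul_one, sub_neg_eq_add, ← two_smul K,
      map_smul] at h
    exact (Submodule.smul_mem_iff N two_ne_zero).mp h
  have hind : LinearIndependent K fun j : ℕ => e (ι K x ^ (2 * j + 1)) :=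
    ((linearIndependent_pow_of_primitive
      (UniversalEnvelopingAlgebra.comulAlgHom_ι x) (UniversalEnvelopingAlgebra.counitAlgHom_ι x)
      hx).comp _ fun a b h => by omega).map' e.toLinearMap e.ker
  have := hind.finite_of_le_span_finite _ (w : Set _) (by
    rw [hw]
    rintro _ ⟨j, rfl⟩
    exact hodd j)
  exact not_finite ℕ

end LieSemidirect

theorem lieSemidirect_fg_not_fp (K : Type*) [Field K] [CharZero K]
    (L : Type*) [LieRing L] [LieAlgebra K L] [Nontrivial L] [Module.Finite K L] :
    LieAlgebra.IsFinitelyGenerated K (LieSemidirect K L) ∧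
      ¬ LieAlgebra.IsFinitelyPresented K (LieSemidirect K L) :=
  ⟨LieSemidirect.isFinitelyGenerated, LieSemidirect.not_isFinitelyPresented K L⟩
end
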